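/- arXiv:2307.02217 — 6 statements merged into one kernel-verified Lean document; each statement's English description precedes it below -/
import Mathlib

section
/- Let φ : ℕ → (0,∞) be in weak-ℓ¹ with ‖φ‖_{ℓ^{1,∞}} = M, and let ν be the measure on ℕ with ν({n}) = φ(n)². Let a : ℕ → [0,∞) be a bounded sequence with sup_n a(n) ≤ A. Then for every y > 0, y · ν({n ∈ ℕ : a(n)/φ(n) > y}) ≤ 2 A M. -/
open scoped ENNReal
open MeasureTheory

/-- Weak-(1,1) estimate: if `φ : ℕ → (0,∞)` has weak-`ℓ¹` norm at
most `M`, `ν({n}) = φ(n)²`, and `a : ℕ → [0,∞)` is bounded by `A`, then for every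
`y > 0`, `y * ν({n | a n / φ n > y}) ≤ 2 * A * M`. -/
theorem weak_type_one_one_paley (φ : ℕ → ℝ) (hφ : ∀ n, 0 < φ n) (M : ℝ)
    (hfin : ∀ s : ℝ, 0 < s → {n : ℕ | s < φ n}.Finite)
    (hM : ∀ s : ℝ, 0 < s → s * ({n : ℕ | s < φ n}.ncard : ℝ) ≤ M)
    (a : ℕ → ℝ) (ha : ∀ n, 0 ≤ a n) (A : ℝ) (hA : ∀ n, a n ≤ A) :
    ∀ y : ℝ, 0 < y →
      ENNReal.ofReal y *
        (∑' n : ℕ, if y < a n / φ n then ENNReal.ofReal (φ n ^ 2) else 0)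
          ≤ ENNReal.ofReal (2 * A * M) := by
  intro y hy
  have hA0 : 0 ≤ A := (ha 0).trans (hA 0)
  have hM0 : 0 ≤ M := by
    have h1 := hM 1 one_pos
    have h2 : (0:ℝ) ≤ ({n : ℕ | (1:ℝ) < φ n}.ncard : ℝ) := Nat.cast_nonneg _
    nlinarith
  set t : ℝ := A / y with ht
  set g : ℕ → ℝ → ℝ≥0∞ := fun n s =>
    if y < a n / φ n then (Set.Ioo 0 (φ n)).indicator (fun s => ENNReal.ofReal (2*s)) s
    else 0 with hg
  -- if the condition holds, φ n < t
  have hφt : ∀ n, y < a n / φ n → φ n < t := by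
    intro n hn
    have h1 : y * φ n < a n := (lt_div_iff₀ (hφ n)).mp hn
    rw [ht, lt_div_iff₀ hy]
    nlinarith [hA n]
  -- each term equals the layer-cake integral
  have hterm : ∀ n, (if y < a n / φ n then ENNReal.ofReal (φ n ^ 2) else 0)
      = ∫⁻ s, g n s := by
    intro n
    by_cases h : y < a n / φ n
    · simp only [hg, h, if_true]
      rw [lintegral_indicator measurableSet_Ioo _,
        ← ofReal_integral_eq_lintegral_ofReal]
      · congr 1
        rw [← integral_Ioc_eq_integral_Ioo,
          ← intervalIntegral.integral_of_le (le_of_lt (hφ n))]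
        rw [intervalIntegral.integral_const_mul, integral_id]
        ring
      · exact ((continuous_const.mul continuous_id).continuousOn.integrableOn_Icc).mono_set
          Set.Ioo_subset_Icc_self
      · filter_upwards [ae_restrict_mem measurableSet_Ioo] with s hs
        simp only [Pi.zero_apply]
        nlinarith [hs.1]
    · simp [hg, h]
  have hgmeas : ∀ n, Measurable (g n) := by
    intro n
    simp only [hg]
    by_cases h : y < a n / φ n
    · simp only [h, if_true]
      exact ((measurable_id.const_mul 2).ennreal_ofReal).indicator measurableSet_Ioo
    · simp only [h, if_false]; exact measurable_const
  -- pointwise bound on the summed integrand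
  have hpt : ∀ s : ℝ, (∑' n, g n s)
      ≤ (Set.Ioo 0 t).indicator (fun _ => ENNReal.ofReal (2*M)) s := by
    intro s
    by_cases hs : s ∈ Set.Ioo 0 t
    · -- bound the sum by ofReal (2s) * card {n | s < φ n}
      have hT := hfin s hs.1
      calc ∑' n, g n s
          ≤ ∑' n, Set.indicator {n : ℕ | s < φ n}
              (fun _ => ENNReal.ofReal (2*s)) n := by
            apply ENNReal.tsum_le_tsum
            intro n
            simp only [hg]
            by_cases h : y < a n / φ n
            · simp only [h, if_true]
              by_cases h2 : s ∈ Set.Ioo 0 (φ n)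
              · rw [Set.indicator_of_mem h2, Set.indicator_of_mem (by exact h2.2)]
              · simp [Set.indicator_of_notMem h2]
            · simp [h]
        _ = ∑ n ∈ hT.toFinset, Set.indicator {n : ℕ | s < φ n}
              (fun _ => ENNReal.ofReal (2*s)) n := by
            apply tsum_eq_sum
            intro n hn
            apply Set.indicator_of_notMem
            simpa using hn
        _ = (hT.toFinset.card : ℝ≥0∞) * ENNReal.ofReal (2*s) := by
            rw [Finset.sum_congr rfl (fun n hn => Set.indicator_of_mem
              (by simpa using hn) _), Finset.sum_const, nsmul_eq_mul]
        _ ≤ ENNReal.ofReal (2*M) := by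
            rw [← ENNReal.ofReal_natCast, ← ENNReal.ofReal_mul (Nat.cast_nonneg _)]
            apply ENNReal.ofReal_le_ofReal
            have hcard : ({n : ℕ | s < φ n}.ncard : ℝ) = (hT.toFinset.card : ℝ) := by
              rw [Set.ncard_eq_toFinset_card _ hT]
            have := hM s hs.1
            rw [hcard] at this
            nlinarith [hs.1]
        _ = (Set.Ioo 0 t).indicator (fun _ => ENNReal.ofReal (2*M)) s := by
            rw [Set.indicator_of_mem hs]
    · -- outside (0,t) every term vanishes
      have : ∀ n, g n s = 0 := by
        intro n
        simp only [hg]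
        by_cases h : y < a n / φ n
        · simp only [h, if_true]
          apply Set.indicator_of_notMem
          intro hmem
          exact hs ⟨hmem.1, hmem.2.trans (hφt n h)⟩
        · simp [h]
      simp [ENNReal.tsum_eq_zero.mpr this]
  calc ENNReal.ofReal y * (∑' n : ℕ, if y < a n / φ n then ENNReal.ofReal (φ n ^ 2) else 0)
      = ENNReal.ofReal y * ∑' n, ∫⁻ s, g n s := by
        congr 1
        exact tsum_congr hterm
    _ = ENNReal.ofReal y * ∫⁻ s, ∑' n, g n s := by
        rw [lintegral_tsum (fun n => (hgmeas n).aemeasurable)]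
    _ ≤ ENNReal.ofReal y *
        ∫⁻ s, (Set.Ioo 0 t).indicator (fun _ => ENNReal.ofReal (2*M)) s := by
        gcongr with s
        exact hpt s

    _ = ENNReal.ofReal y * (ENNReal.ofReal (2*M) * ENNReal.ofReal t) := by
        rw [lintegral_indicator measurableSet_Ioo _, setLIntegral_const,
          Real.volume_Ioo, sub_zero]
    _ ≤ ENNReal.ofReal (2 * A * M) := by
        rw [← ENNReal.ofReal_mul (by positivity), ← ENNReal.ofReal_mul hy.le]
        apply ENNReal.ofReal_le_ofReal
        rw [ht]
        field_simp
        ring_nf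
        exact le_refl _
end

section
/- Let H be a Hilbert space and T, S compact operators on H. Then for all natural numbers n, m (indexing singular values from 1), the singular values satisfy S_{n+m+1}(T+S) ≤ S_{n+1}(T) + S_{m+1}(S). Consequently, for compact operators M and A, S_{2n}(M∘A) ≤ S_n(M) · S_n(A) for all n ≥ 1. -/
open scoped ENNReal

variable {H : Type*} [NormedAddCommGroup H] [InnerProductSpace ℂ H] [CompleteSpace H]

/-- The `n`-th approximation number (`n ≥ 0`): the distance from `T` to operators of
rank at most `n`.  For a compact operator on a Hilbert space, `appNumber T n` is the
`(n+1)`-st singular value of `T`. -/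
noncomputable def appNumber (T : H →L[ℂ] H) (n : ℕ) : ℝ :=
  sInf {r : ℝ | ∃ F : H →L[ℂ] H,
    FiniteDimensional ℂ (LinearMap.range (F : H →ₗ[ℂ] H)) ∧
    Module.finrank ℂ (LinearMap.range (F : H →ₗ[ℂ] H)) ≤ n ∧ ‖T - F‖ = r}

/-- The `k`-th singular value, indexed from `1`: `singularValue T k = S_k(T)`. -/
noncomputable def singularValue (T : H →L[ℂ] H) (k : ℕ) : ℝ :=
  appNumber T (k - 1)

/-- The defining set of `appNumber`. -/
def appSet (T : H →L[ℂ] H) (n : ℕ) : Set ℝ :=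
  {r : ℝ | ∃ F : H →L[ℂ] H,
    FiniteDimensional ℂ (LinearMap.range (F : H →ₗ[ℂ] H)) ∧
    Module.finrank ℂ (LinearMap.range (F : H →ₗ[ℂ] H)) ≤ n ∧ ‖T - F‖ = r}

lemma appNumber_eq_sInf (T : H →L[ℂ] H) (n : ℕ) : appNumber T n = sInf (appSet T n) := rfl

lemma appSet_nonempty (T : H →L[ℂ] H) (n : ℕ) : (appSet T n).Nonempty := by
  refine ⟨‖T‖, 0, ?_, ?_, by simp⟩
  · rw [ContinuousLinearMap.coe_zero, LinearMap.range_zero]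
    infer_instance
  · rw [ContinuousLinearMap.coe_zero, LinearMap.range_zero, finrank_bot]
    exact Nat.zero_le _

lemma appSet_bddBelow (T : H →L[ℂ] H) (n : ℕ) : BddBelow (appSet T n) := by
  refine ⟨0, fun r hr => ?_⟩
  obtain ⟨F, -, -, hF⟩ := hr
  exact hF ▸ norm_nonneg _

lemma appNumber_nonneg (T : H →L[ℂ] H) (n : ℕ) : 0 ≤ appNumber T n := by
  rw [appNumber_eq_sInf]
  apply Real.sInf_nonneg
  rintro r ⟨F, -, -, hF⟩
  exact hF ▸ norm_nonneg _

lemma appNumber_le (T F : H →L[ℂ] H) (n : ℕ)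
    (h1 : FiniteDimensional ℂ (LinearMap.range (F : H →ₗ[ℂ] H)))
    (h2 : Module.finrank ℂ (LinearMap.range (F : H →ₗ[ℂ] H)) ≤ n) :
    appNumber T n ≤ ‖T - F‖ := by
  rw [appNumber_eq_sInf]
  exact csInf_le (appSet_bddBelow T n) ⟨F, h1, h2, rfl⟩

lemma appNumber_antitone (T : H →L[ℂ] H) {n m : ℕ} (h : n ≤ m) :
    appNumber T m ≤ appNumber T n := by
  rw [appNumber_eq_sInf, appNumber_eq_sInf]
  refine csInf_le_csInf (appSet_bddBelow T m) (appSet_nonempty T n) ?_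
  rintro r ⟨F, h1, h2, hF⟩
  exact ⟨F, h1, h2.trans h, hF⟩

lemma exists_approx (T : H →L[ℂ] H) (n : ℕ) {ε : ℝ} (hε : 0 < ε) :
    ∃ F : H →L[ℂ] H,
      FiniteDimensional ℂ (LinearMap.range (F : H →ₗ[ℂ] H)) ∧
      Module.finrank ℂ (LinearMap.range (F : H →ₗ[ℂ] H)) ≤ n ∧
      ‖T - F‖ < appNumber T n + ε := by
  have h : sInf (appSet T n) < appNumber T n + ε := by
    rw [appNumber_eq_sInf]; linarith
  obtain ⟨r, ⟨F, h1, h2, hF⟩, hr⟩ := exists_lt_of_csInf_lt (appSet_nonempty T n) h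
  exact ⟨F, h1, h2, hF ▸ hr⟩

/-- For compact operators `T, S` on a Hilbert space `H`,
`S_{n+m+1}(T+S) ≤ S_{n+1}(T) + S_{m+1}(S)`; consequently, for compact `M, A`,
`S_{2n}(M ∘ A) ≤ S_n(M) · S_n(A)` for all `n ≥ 1`. -/
theorem singularValue_add_le_and_comp_le
    (T S : H →L[ℂ] H) (hT : IsCompactOperator (⇑T)) (hS : IsCompactOperator (⇑S)) :
    (∀ n m : ℕ, singularValue (T + S) (n + m + 1)
        ≤ singularValue T (n + 1) + singularValue S (m + 1)) ∧
    (∀ (M A : H →L[ℂ] H), IsCompactOperator (⇑M) → IsCompactOperator (⇑A) →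
      ∀ n : ℕ, 1 ≤ n →
        singularValue (M.comp A) (2 * n) ≤ singularValue M n * singularValue A n) := by
  constructor
  · -- additivity of approximation numbers
    intro n m
    simp only [singularValue, Nat.add_sub_cancel]
    have key : ∀ ε : ℝ, 0 < ε →
        appNumber (T + S) (n + m) ≤ appNumber T n + appNumber S m + ε := by
      intro ε hε
      obtain ⟨F, hF1, hF2, hF3⟩ := exists_approx T n (half_pos hε)
      obtain ⟨G, hG1, hG2, hG3⟩ := exists_approx S m (half_pos hε)
      -- the sum F + G has rank at most n + m
      set p : Submodule ℂ H :=
        LinearMap.range (F : H →ₗ[ℂ] H) ⊔ LinearMap.range (G : H →ₗ[ℂ] H) with hp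
      have hle : LinearMap.range ((F + G : H →L[ℂ] H) : H →ₗ[ℂ] H) ≤ p := by
        rintro x ⟨y, rfl⟩
        exact Submodule.add_mem_sup ⟨y, rfl⟩ ⟨y, rfl⟩
      have hpFD : FiniteDimensional ℂ p := by
        exact Submodule.finiteDimensional_sup _ _
      have hrange : FiniteDimensional ℂ
          (LinearMap.range ((F + G : H →L[ℂ] H) : H →ₗ[ℂ] H)) :=
        Submodule.finiteDimensional_of_le hle
      have hrank : Module.finrank ℂ
          (LinearMap.range ((F + G : H →L[ℂ] H) : H →ₗ[ℂ] H)) ≤ n + m := by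
        calc Module.finrank ℂ (LinearMap.range ((F + G : H →L[ℂ] H) : H →ₗ[ℂ] H))
            ≤ Module.finrank ℂ p := Submodule.finrank_mono hle
          _ ≤ Module.finrank ℂ (LinearMap.range (F : H →ₗ[ℂ] H)) +
              Module.finrank ℂ (LinearMap.range (G : H →ₗ[ℂ] H)) :=
            Submodule.finrank_add_le_finrank_add_finrank _ _
          _ ≤ n + m := Nat.add_le_add hF2 hG2
      calc appNumber (T + S) (n + m) ≤ ‖(T + S) - (F + G)‖ :=
            appNumber_le _ _ _ hrange hrank
        _ = ‖(T - F) + (S - G)‖ := by rw [show T + S - (F + G) = (T - F) + (S - G) by abel]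
        _ ≤ ‖T - F‖ + ‖S - G‖ := norm_add_le _ _
        _ ≤ appNumber T n + appNumber S m + ε := by linarith
    linarith [le_of_forall_pos_le_add key]
  · -- multiplicativity for composition
    intro M A _ _ n hn
    simp only [singularValue]
    set a := appNumber M (n - 1) with ha
    set b := appNumber A (n - 1) with hb
    have ha0 : 0 ≤ a := appNumber_nonneg _ _
    have hb0 : 0 ≤ b := appNumber_nonneg _ _
    have key : ∀ ε : ℝ, 0 < ε → ε ≤ 1 →
        appNumber (M.comp A) (2 * n - 1) ≤ (a + ε) * (b + ε) := by
      intro ε hε _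
      obtain ⟨F, hF1, hF2, hF3⟩ := exists_approx M (n - 1) hε
      obtain ⟨G, hG1, hG2, hG3⟩ := exists_approx A (n - 1) hε
      set R : H →L[ℂ] H := F.comp A + (M - F).comp G with hR
      -- rank of R is at most 2 * (n - 1)
      set p : Submodule ℂ H :=
        LinearMap.range (F : H →ₗ[ℂ] H) ⊔
          Submodule.map ((M - F : H →L[ℂ] H) : H →ₗ[ℂ] H)
            (LinearMap.range (G : H →ₗ[ℂ] H)) with hp
      have hle : LinearMap.range ((R : H →L[ℂ] H) : H →ₗ[ℂ] H) ≤ p := by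
        rintro x ⟨y, rfl⟩
        have : (R : H →ₗ[ℂ] H) y = F (A y) + (M - F) (G y) := by
          simp [hR]
        rw [this]
        exact Submodule.add_mem_sup ⟨A y, rfl⟩ ⟨G y, ⟨y, rfl⟩, rfl⟩
      have hmapFD : FiniteDimensional ℂ
          (Submodule.map ((M - F : H →L[ℂ] H) : H →ₗ[ℂ] H)
            (LinearMap.range (G : H →ₗ[ℂ] H))) :=
        Module.Finite.map _ _
      have hpFD : FiniteDimensional ℂ p := Submodule.finiteDimensional_sup _ _
      have hrange : FiniteDimensional ℂ
          (LinearMap.range ((R : H →L[ℂ] H) : H →ₗ[ℂ] H)) :=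
        Submodule.finiteDimensional_of_le hle
      have hrank : Module.finrank ℂ
          (LinearMap.range ((R : H →L[ℂ] H) : H →ₗ[ℂ] H)) ≤ 2 * n - 1 := by
        calc Module.finrank ℂ (LinearMap.range ((R : H →L[ℂ] H) : H →ₗ[ℂ] H))
            ≤ Module.finrank ℂ p := Submodule.finrank_mono hle
          _ ≤ Module.finrank ℂ (LinearMap.range (F : H →ₗ[ℂ] H)) +
              Module.finrank ℂ (Submodule.map ((M - F : H →L[ℂ] H) : H →ₗ[ℂ] H)
                (LinearMap.range (G : H →ₗ[ℂ] H))) :=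
            Submodule.finrank_add_le_finrank_add_finrank _ _
          _ ≤ (n - 1) + (n - 1) := by
            refine Nat.add_le_add hF2 (le_trans ?_ hG2)
            exact Submodule.finrank_map_le _ _
          _ ≤ 2 * n - 1 := by omega
      have hMA : M.comp A - R = (M - F).comp (A - G) := by
        ext x
        simp [hR, ContinuousLinearMap.sub_apply, ContinuousLinearMap.comp_apply, map_sub]
        abel
      calc appNumber (M.comp A) (2 * n - 1) ≤ ‖M.comp A - R‖ :=
            appNumber_le _ _ _ hrange hrank
        _ = ‖(M - F).comp (A - G)‖ := by rw [hMA]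
        _ ≤ ‖M - F‖ * ‖A - G‖ := ContinuousLinearMap.opNorm_comp_le _ _
        _ ≤ (a + ε) * (b + ε) := by
            apply mul_le_mul (le_of_lt hF3) (le_of_lt hG3) (norm_nonneg _)
            linarith
    have key2 : ∀ δ : ℝ, 0 < δ → appNumber (M.comp A) (2 * n - 1) ≤ a * b + δ := by
      intro δ hδ
      set ε := min 1 (δ / (a + b + 1)) with hεdef
      have hab1 : 0 < a + b + 1 := by linarith
      have hε1 : ε ≤ 1 := min_le_left _ _
      have hε0 : 0 < ε := lt_min one_pos (div_pos hδ hab1)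
      have hεδ : ε * (a + b + 1) ≤ δ := by
        calc ε * (a + b + 1) ≤ (δ / (a + b + 1)) * (a + b + 1) :=
              mul_le_mul_of_nonneg_right (min_le_right _ _) (le_of_lt hab1)
          _ = δ := div_mul_cancel₀ _ (ne_of_gt hab1)
      have := key ε hε0 hε1
      nlinarith
    exact le_of_forall_pos_le_add key2
end

section
/- Let φ : ℕ → (0,∞) with weak-ℓ¹ norm M = sup_{s>0} s·#{n : φ(n)>s} < ∞, let ν({n}) = φ(n)², and let 1 < p < 2. Suppose T : L¹(Ω) + L²(Ω) → (sequences on ℕ) is a sublinear map satisfying the weak-type bounds: ν({n : |Tf(n)| > y}) ≤ 2 M ‖f‖₁ / y for all y > 0 and all f ∈ L¹, and ∑_n |Tf(n)|² φ(n)² ≤ ‖f‖₂² for all f ∈ L². Then there is a constant C = C(p) such that (∑_n |Tf(n)|^p φ(n)²)^{1/p} ≤ C M^{(2-p)/p} ‖f‖_p for all f ∈ L^p(Ω). -/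
/-!
For `t > 0` split `f` at height `c t` into a large part `f₁ ∈ L¹` and a small part `f₂ ∈ L²`.
Sublinearity, the weak `(1,1)` bound and Chebyshev's inequality for the strong `(2,2)` bound give
`ν {|T f| > t} ≤ (2A / t) ‖f₁‖₁ + (4 / t²) ‖f₂‖₂²`. Integrating against `p t^(p-1) dt` (layer cake)
and exchanging the order of integration turns the two terms into `2A c^(1-p) / (p-1)` and
`4 c^(2-p) / (2-p)` times `∫ |f|^p`; with `c = A / 2` both are of order `A^(2-p)`. For the weighted counting measure `ν {n} = φ(n)²` and `A = 2M`, taking `p`-th roots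
gives the factor `M^((2-p)/p)`.
-/

open MeasureTheory Set
open scoped ENNReal

lemma lintegral_Ioo_zero_rpow {q r : ℝ} (hq : -1 < q) (hr : 0 ≤ r) :
    ∫⁻ t in Ioo 0 r, ENNReal.ofReal (t ^ q) = ENNReal.ofReal (r ^ (q + 1) / (q + 1)) := by
  have hint : IntegrableOn (fun t : ℝ => t ^ q) (Ioo 0 r) :=
    ((intervalIntegral.intervalIntegrable_rpow' hq).1.mono_set Ioo_subset_Ioc_self)
  rw [← ofReal_integral_eq_lintegral_ofReal hint
      (ae_restrict_of_forall_mem measurableSet_Ioo fun t ht => Real.rpow_nonneg ht.1.le q),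
    ← integral_Ioc_eq_integral_Ioo, ← intervalIntegral.integral_of_le hr,
    integral_rpow (Or.inl hq), Real.zero_rpow (by linarith), sub_zero]

lemma lintegral_Ioi_rpow {q r : ℝ} (hq : q < -1) (hr : 0 < r) :
    ∫⁻ t in Ioi r, ENNReal.ofReal (t ^ q) = ENNReal.ofReal (-r ^ (q + 1) / (q + 1)) := by
  rw [← ofReal_integral_eq_lintegral_ofReal (integrableOn_Ioi_rpow_of_lt hq hr)
      (ae_restrict_of_forall_mem measurableSet_Ioi fun t ht =>
        Real.rpow_nonneg (hr.trans ht).le q),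
    integral_Ioi_rpow_of_lt hq hr]

lemma lintegral_Ioi_ite_lt_mul_rpow {p c a : ℝ} (hp : 1 < p) (hc : 0 < c) (ha : 0 ≤ a) :
    ∫⁻ t in Ioi 0, (if c * t < a then ENNReal.ofReal a else 0) * ENNReal.ofReal (t ^ (p - 2))
      = ENNReal.ofReal (c ^ (1 - p) / (p - 1) * a ^ p) := by
  have hind : (fun t => (if c * t < a then ENNReal.ofReal a else 0) * ENNReal.ofReal (t ^ (p - 2)))
      = (Iio (a / c)).indicator fun t => ENNReal.ofReal a * ENNReal.ofReal (t ^ (p - 2)) := by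
    ext t
    simp only [indicator_apply, mem_Iio, lt_div_iff₀ hc, mul_comm t c, ite_mul, zero_mul]
  rw [hind, lintegral_indicator measurableSet_Iio, Measure.restrict_restrict measurableSet_Iio,
    Iio_inter_Ioi, lintegral_const_mul' _ _ ENNReal.ofReal_ne_top,
    lintegral_Ioo_zero_rpow (by linarith) (div_nonneg ha hc.le), ← ENNReal.ofReal_mul ha]
  congr 1
  rw [show p - 2 + 1 = p - 1 by ring, Real.div_rpow ha hc.le, show 1 - p = -(p - 1) by ring,
    Real.rpow_neg hc.le]
  have : a ^ p = a * a ^ (p - 1) := by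
    rw [← Real.rpow_one_add' ha (by linarith)]; ring_nf
  rw [this]
  field_simp

lemma lintegral_Ioi_ite_lt_mul_sq_rpow {p c a : ℝ} (hp0 : 0 < p) (hp : p < 2) (hc : 0 < c)
    (ha : 0 ≤ a) :
    ∫⁻ t in Ioi 0, (if c * t < a then 0 else ENNReal.ofReal (a ^ 2)) * ENNReal.ofReal (t ^ (p - 3))
      = ENNReal.ofReal (c ^ (2 - p) / (2 - p) * a ^ p) := by
  rcases ha.eq_or_lt with rfl | ha
  · simp [Real.zero_rpow hp0.ne']
  have hind :
      (fun t => (if c * t < a then 0 else ENNReal.ofReal (a ^ 2)) * ENNReal.ofReal (t ^ (p - 3)))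
      = (Ici (a / c)).indicator fun t => ENNReal.ofReal (a ^ 2) * ENNReal.ofReal (t ^ (p - 3)) := by
    ext t
    simp only [indicator_apply, mem_Ici, div_le_iff₀ hc, mul_comm t c, ← not_lt, ite_not, ite_mul,
      zero_mul]
  rw [hind, lintegral_indicator measurableSet_Ici, Measure.restrict_restrict measurableSet_Ici,
    inter_eq_left.2 (Ici_subset_Ioi.2 (div_pos ha hc)), setLIntegral_congr Ioi_ae_eq_Ici.symm,
    lintegral_const_mul' _ _ ENNReal.ofReal_ne_top,
    lintegral_Ioi_rpow (by linarith) (div_pos ha hc), ← ENNReal.ofReal_mul (sq_nonneg a)]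
  congr 1
  rw [show p - 3 + 1 = p - 2 by ring, Real.div_rpow ha.le hc.le, show 2 - p = -(p - 2) by ring,
    Real.rpow_neg hc.le]
  have : a ^ p = a ^ 2 * a ^ (p - 2) := by
    rw [← Real.rpow_natCast, ← Real.rpow_add ha]; norm_num
  rw [this]
  have : p - 2 ≠ 0 := by linarith
  field_simp

section Truncation

variable {α E : Type*} [MeasurableSpace α] [NormedAddCommGroup E] {μ : Measure α}

lemma lintegral_Ioi_lintegral_norm_swap [SFinite μ] {f : α → E}
    (hf : AEStronglyMeasurable f μ) {H : ℝ → ℝ → ℝ≥0∞} (hH : Measurable (Function.uncurry H)) :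
    ∫⁻ t in Ioi 0, ∫⁻ x, H t ‖f x‖ ∂μ = ∫⁻ x, (∫⁻ t in Ioi (0 : ℝ), H t ‖f x‖) ∂μ :=
  lintegral_lintegral_swap
    (hH.comp_aemeasurable (measurable_fst.aemeasurable.prodMk hf.norm.aemeasurable.comp_snd))

lemma eLpNorm_ofReal_rpow_eq_lintegral {p : ℝ} (hp : 0 < p) (f : α → E) :
    eLpNorm f (ENNReal.ofReal p) μ ^ p = ∫⁻ x, ENNReal.ofReal (‖f x‖ ^ p) ∂μ := by
  rw [eLpNorm_eq_eLpNorm' (by simpa using hp) ENNReal.ofReal_ne_top, ENNReal.toReal_ofReal hp.le,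
    ← lintegral_rpow_enorm_eq_rpow_eLpNorm' hp]
  simp_rw [← ofReal_norm, ENNReal.ofReal_rpow_of_nonneg (norm_nonneg _) hp.le]

lemma lintegral_Ioi_eLpNorm_indicator_lt_mul_rpow [SFinite μ] {f : α → E}
    (hf : AEStronglyMeasurable f μ) {p c : ℝ} (hp : 1 < p) (hc : 0 < c) :
    ∫⁻ t in Ioi 0, eLpNorm ({x | c * t < ‖f x‖}.indicator f) 1 μ * ENNReal.ofReal (t ^ (p - 2))
      = ENNReal.ofReal (c ^ (1 - p) / (p - 1)) * ∫⁻ x, ENNReal.ofReal (‖f x‖ ^ p) ∂μ := by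
  have hH : Measurable (Function.uncurry fun t a : ℝ =>
      (if c * t < a then ENNReal.ofReal a else 0) * ENNReal.ofReal (t ^ (p - 2))) := by
    refine Measurable.mul ?_ (by fun_prop)
    exact Measurable.ite (measurableSet_lt (by fun_prop) measurable_snd) (by fun_prop)
      measurable_const
  have hrw (t : ℝ) : eLpNorm ({x | c * t < ‖f x‖}.indicator f) 1 μ * ENNReal.ofReal (t ^ (p - 2))
      = ∫⁻ x, (if c * t < ‖f x‖ then ENNReal.ofReal ‖f x‖ else 0)
          * ENNReal.ofReal (t ^ (p - 2)) ∂μ := by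
    rw [eLpNorm_one_eq_lintegral_enorm, ← lintegral_mul_const' _ _ ENNReal.ofReal_ne_top]
    congr 1 with x
    by_cases hx : c * t < ‖f x‖ <;> simp [hx]
  simp_rw [hrw]
  rw [lintegral_Ioi_lintegral_norm_swap hf hH, ← lintegral_const_mul' _ _ ENNReal.ofReal_ne_top]
  congr 1 with x
  rw [lintegral_Ioi_ite_lt_mul_rpow hp hc (norm_nonneg _), ENNReal.ofReal_mul (by positivity)]

lemma lintegral_Ioi_eLpNorm_indicator_compl_sq_mul_rpow [SFinite μ] {f : α → E}
    (hf : AEStronglyMeasurable f μ) {p c : ℝ} (hp0 : 0 < p) (hp : p < 2) (hc : 0 < c) :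
    ∫⁻ t in Ioi 0,
        eLpNorm ({x | c * t < ‖f x‖}ᶜ.indicator f) 2 μ ^ 2 * ENNReal.ofReal (t ^ (p - 3))
      = ENNReal.ofReal (c ^ (2 - p) / (2 - p)) * ∫⁻ x, ENNReal.ofReal (‖f x‖ ^ p) ∂μ := by
  have hH : Measurable (Function.uncurry fun t a : ℝ =>
      (if c * t < a then 0 else ENNReal.ofReal (a ^ 2)) * ENNReal.ofReal (t ^ (p - 3))) := by
    refine Measurable.mul ?_ (by fun_prop)
    exact Measurable.ite (measurableSet_lt (by fun_prop) measurable_snd) measurable_const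
      (by fun_prop)
  have hrw (t : ℝ) :
      eLpNorm ({x | c * t < ‖f x‖}ᶜ.indicator f) 2 μ ^ 2 * ENNReal.ofReal (t ^ (p - 3))
      = ∫⁻ x, (if c * t < ‖f x‖ then 0 else ENNReal.ofReal (‖f x‖ ^ 2))
          * ENNReal.ofReal (t ^ (p - 3)) ∂μ := by
    have h2 := eLpNorm_ofReal_rpow_eq_lintegral (μ := μ) two_pos
      ({x | c * t < ‖f x‖}ᶜ.indicator f)
    rw [ENNReal.ofReal_ofNat, ENNReal.rpow_two] at h2
    simp_rw [Real.rpow_two] at h2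
    rw [h2, ← lintegral_mul_const' _ _ ENNReal.ofReal_ne_top]
    congr 1 with x
    by_cases hx : c * t < ‖f x‖ <;> simp [hx]
  simp_rw [hrw]
  rw [lintegral_Ioi_lintegral_norm_swap hf hH, ← lintegral_const_mul' _ _ ENNReal.ofReal_ne_top]
  congr 1 with x
  rw [lintegral_Ioi_ite_lt_mul_sq_rpow hp0 hp hc (norm_nonneg _),
    ENNReal.ofReal_mul (by positivity)]

lemma antitone_eLpNorm_indicator_lt_mul {f : α → E} {c : ℝ} (hc : 0 ≤ c) (q : ℝ≥0∞) :
    Antitone fun t => eLpNorm ({x | c * t < ‖f x‖}.indicator f) q μ := by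
  intro s t hst
  refine eLpNorm_mono_enorm fun x => ?_
  simp only [enorm_indicator_eq_indicator_enorm]
  exact indicator_le_indicator_of_subset
    (fun x (hx : c * t < ‖f x‖) => (mul_le_mul_of_nonneg_left hst hc).trans_lt hx)
    (fun _ => zero_le) x

lemma MeasureTheory.MemLp.memLp_one_indicator_lt_norm {f : α → E} {p s : ℝ}
    (hf : MemLp f (ENNReal.ofReal p) μ) (hp : 1 ≤ p) (hs : 0 < s) :
    MemLp ({x | s < ‖f x‖}.indicator f) 1 μ := by
  have hg : MemLp (fun x => s ^ (1 - p) * ‖f x‖ ^ p) 1 μ := by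
    have := hf.norm_rpow (by simp; linarith) ENNReal.ofReal_ne_top
    rw [ENNReal.toReal_ofReal (by linarith)] at this
    exact this.const_mul _
  refine hg.mono' (hf.1.indicator₀ (nullMeasurableSet_lt aemeasurable_const hf.1.norm.aemeasurable))
    (ae_of_all _ fun x => ?_)
  by_cases hx : s < ‖f x‖
  · rw [indicator_of_mem (show x ∈ {x | s < ‖f x‖} from hx)]
    calc ‖f x‖ = ‖f x‖ ^ (1 - p) * ‖f x‖ ^ p := by
          rw [← Real.rpow_add (hs.trans hx)]; norm_num
      _ ≤ s ^ (1 - p) * ‖f x‖ ^ p :=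
          mul_le_mul_of_nonneg_right (Real.rpow_le_rpow_of_nonpos hs hx.le (by linarith))
            (by positivity)
  · rw [indicator_of_notMem (show x ∉ {x | s < ‖f x‖} from hx), norm_zero]
    positivity

lemma MeasureTheory.MemLp.memLp_two_indicator_compl_lt_norm {f : α → E} {p s : ℝ}
    (hf : MemLp f (ENNReal.ofReal p) μ) (hp0 : 0 < p) (hp : p ≤ 2) (hs : 0 < s) :
    MemLp ({x | s < ‖f x‖}ᶜ.indicator f) 2 μ := by
  have hg : Integrable (fun x => s ^ (2 - p) * ‖f x‖ ^ p) μ := by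
    have := hf.norm_rpow (by simpa using hp0) ENNReal.ofReal_ne_top
    rw [ENNReal.toReal_ofReal hp0.le] at this
    exact (memLp_one_iff_integrable.1 this).const_mul _
  have hm : AEStronglyMeasurable ({x | s < ‖f x‖}ᶜ.indicator f) μ :=
    hf.1.indicator₀ (nullMeasurableSet_lt aemeasurable_const hf.1.norm.aemeasurable).compl
  refine (memLp_two_iff_integrable_sq_norm hm).2
    (hg.mono' (hm.norm.pow 2) (ae_of_all _ fun x => ?_))
  rw [Real.norm_of_nonneg (sq_nonneg _)]
  by_cases hx : s < ‖f x‖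
  · rw [indicator_of_notMem (show x ∉ {x | s < ‖f x‖}ᶜ from not_not.2 hx), norm_zero,
      zero_pow two_ne_zero]
    positivity
  · rw [indicator_of_mem (show x ∈ {x | s < ‖f x‖}ᶜ from hx)]
    calc ‖f x‖ ^ 2 = ‖f x‖ ^ (2 - p) * ‖f x‖ ^ p := by
          rw [← Real.rpow_add' (norm_nonneg _) (by norm_num)]; norm_num
      _ ≤ s ^ (2 - p) * ‖f x‖ ^ p := by
          gcongr
          exact not_lt.1 hx

end Truncation

section Interpolation

variable {α β E F : Type*} [MeasurableSpace α] [MeasurableSpace β] [NormedAddCommGroup E]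
  [NormedAddCommGroup F] {μ : Measure α} {ν : Measure β} {T : (α → E) → β → F} {A : ℝ}

def WeakTypeOneOne (T : (α → E) → β → F) (μ : Measure α) (ν : Measure β) (A : ℝ) : Prop :=
  ∀ f, MemLp f 1 μ → ∀ y : ℝ, 0 < y →
    ν {b | y < ‖T f b‖} ≤ ENNReal.ofReal A * eLpNorm f 1 μ / ENNReal.ofReal y

def StrongTypeTwoTwo (T : (α → E) → β → F) (μ : Measure α) (ν : Measure β) : Prop :=
  ∀ f, MemLp f 2 μ → ∫⁻ b, ENNReal.ofReal (‖T f b‖ ^ 2) ∂ν ≤ eLpNorm f 2 μ ^ 2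

lemma measure_lt_norm_add_le_of_weakTypeOneOne_of_strongTypeTwoTwo
    (hTm : ∀ f, AEMeasurable (fun b => ‖T f b‖) ν)
    (hsub : ∀ f g b, ‖T (f + g) b‖ ≤ ‖T f b‖ + ‖T g b‖)
    (hweak : WeakTypeOneOne T μ ν A) (hstrong : StrongTypeTwoTwo T μ ν)
    {f₁ f₂ : α → E} (h₁ : MemLp f₁ 1 μ) (h₂ : MemLp f₂ 2 μ) {t : ℝ} (ht : 0 < t) :
    ν {b | t < ‖T (f₁ + f₂) b‖}
      ≤ ENNReal.ofReal (2 * A / t) * eLpNorm f₁ 1 μ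
        + ENNReal.ofReal (4 / t ^ 2) * eLpNorm f₂ 2 μ ^ 2 := by
  have ht2 : 0 < t / 2 := half_pos ht
  have hsplit :
      {b | t < ‖T (f₁ + f₂) b‖} ⊆ {b | t / 2 < ‖T f₁ b‖} ∪ {b | t / 2 < ‖T f₂ b‖} := by
    intro b (hb : t < ‖T (f₁ + f₂) b‖)
    by_contra! h
    simp only [mem_union, mem_ofPred_eq, not_or, not_lt] at h
    linarith [hsub f₁ f₂ b]
  have hweak₁ : ν {b | t / 2 < ‖T f₁ b‖} ≤ ENNReal.ofReal (2 * A / t) * eLpNorm f₁ 1 μ := by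
    refine (hweak f₁ h₁ _ ht2).trans_eq ?_
    rw [div_eq_mul_inv, ← ENNReal.ofReal_inv_of_pos ht2, mul_comm, ← mul_assoc,
      ← ENNReal.ofReal_mul (inv_nonneg.2 ht2.le)]
    congr 2
    field_simp
  have hcheb₂ : ν {b | t / 2 < ‖T f₂ b‖} ≤ ENNReal.ofReal (4 / t ^ 2) * eLpNorm f₂ 2 μ ^ 2 := by
    have hpos : ENNReal.ofReal ((t / 2) ^ 2) ≠ 0 := by simp; positivity
    calc ν {b | t / 2 < ‖T f₂ b‖}
        ≤ ν {b | ENNReal.ofReal ((t / 2) ^ 2) ≤ ENNReal.ofReal (‖T f₂ b‖ ^ 2)} :=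
          measure_mono fun b (hb : t / 2 < ‖T f₂ b‖) =>
            ENNReal.ofReal_le_ofReal (pow_le_pow_left₀ ht2.le hb.le 2)
      _ ≤ (∫⁻ b, ENNReal.ofReal (‖T f₂ b‖ ^ 2) ∂ν) / ENNReal.ofReal ((t / 2) ^ 2) :=
          meas_ge_le_lintegral_div ((hTm f₂).pow_const 2).ennreal_ofReal hpos
            ENNReal.ofReal_ne_top
      _ ≤ eLpNorm f₂ 2 μ ^ 2 / ENNReal.ofReal ((t / 2) ^ 2) := by gcongr; exact hstrong f₂ h₂
      _ = ENNReal.ofReal (4 / t ^ 2) * eLpNorm f₂ 2 μ ^ 2 := by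
          rw [div_eq_mul_inv, ← ENNReal.ofReal_inv_of_pos (by positivity), mul_comm]
          congr 2
          field_simp
          ring
  calc ν {b | t < ‖T (f₁ + f₂) b‖}
      ≤ ν {b | t / 2 < ‖T f₁ b‖} + ν {b | t / 2 < ‖T f₂ b‖} :=
        (measure_mono hsplit).trans (measure_union_le _ _)
    _ ≤ _ := add_le_add hweak₁ hcheb₂

lemma measure_lt_norm_mul_rpow_le_of_weakTypeOneOne_of_strongTypeTwoTwo
    (hTm : ∀ f, AEMeasurable (fun b => ‖T f b‖) ν)
    (hsub : ∀ f g b, ‖T (f + g) b‖ ≤ ‖T f b‖ + ‖T g b‖)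
    (hweak : WeakTypeOneOne T μ ν A) (hstrong : StrongTypeTwoTwo T μ ν) (hA : 0 ≤ A)
    {p c t : ℝ} (hp1 : 1 ≤ p) (hp2 : p ≤ 2) (hc : 0 < c) (ht : 0 < t) {f : α → E}
    (hf : MemLp f (ENNReal.ofReal p) μ) :
    ν {b | t < ‖T f b‖} * ENNReal.ofReal (t ^ (p - 1))
      ≤ ENNReal.ofReal (2 * A)
          * (eLpNorm ({x | c * t < ‖f x‖}.indicator f) 1 μ * ENNReal.ofReal (t ^ (p - 2)))
        + 4 * (eLpNorm ({x | c * t < ‖f x‖}ᶜ.indicator f) 2 μ ^ 2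
          * ENNReal.ofReal (t ^ (p - 3))) := by
  have hct : 0 < c * t := mul_pos hc ht
  have h := measure_lt_norm_add_le_of_weakTypeOneOne_of_strongTypeTwoTwo hTm hsub hweak hstrong
    (hf.memLp_one_indicator_lt_norm hp1 hct)
    (hf.memLp_two_indicator_compl_lt_norm (by linarith) hp2 hct) ht
  rw [indicator_self_add_compl] at h
  have e₁ : ENNReal.ofReal (2 * A / t) * ENNReal.ofReal (t ^ (p - 1))
      = ENNReal.ofReal (2 * A) * ENNReal.ofReal (t ^ (p - 2)) := by
    rw [← ENNReal.ofReal_mul (by positivity), ← ENNReal.ofReal_mul (by positivity),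
      show p - 1 = p - 2 + 1 by ring, Real.rpow_add_one ht.ne']
    congr 1
    field_simp
  have e₂ : ENNReal.ofReal (4 / t ^ 2) * ENNReal.ofReal (t ^ (p - 1))
      = 4 * ENNReal.ofReal (t ^ (p - 3)) := by
    rw [← ENNReal.ofReal_mul (by positivity), ← ENNReal.ofReal_ofNat 4,
      ← ENNReal.ofReal_mul (by norm_num), show p - 1 = p - 3 + 2 by ring,
      Real.rpow_add ht, Real.rpow_two]
    field_simp
  calc ν {b | t < ‖T f b‖} * ENNReal.ofReal (t ^ (p - 1))
      ≤ (ENNReal.ofReal (2 * A / t) * eLpNorm ({x | c * t < ‖f x‖}.indicator f) 1 μ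
          + ENNReal.ofReal (4 / t ^ 2) * eLpNorm ({x | c * t < ‖f x‖}ᶜ.indicator f) 2 μ ^ 2)
          * ENNReal.ofReal (t ^ (p - 1)) := by gcongr
    _ = _ := by
        rw [add_mul, mul_right_comm (ENNReal.ofReal (2 * A / t)), e₁,
          mul_right_comm (ENNReal.ofReal (4 / t ^ 2)), e₂]
        ring

theorem lintegral_rpow_norm_le_of_weakTypeOneOne_of_strongTypeTwoTwo [SFinite μ]
    (hTm : ∀ f, AEMeasurable (fun b => ‖T f b‖) ν)
    (hsub : ∀ f g b, ‖T (f + g) b‖ ≤ ‖T f b‖ + ‖T g b‖)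
    (hweak : WeakTypeOneOne T μ ν A) (hstrong : StrongTypeTwoTwo T μ ν)
    (hA : 0 < A) {p : ℝ} (hp1 : 1 < p) (hp2 : p < 2) {f : α → E}
    (hf : MemLp f (ENNReal.ofReal p) μ) :
    ∫⁻ b, ENNReal.ofReal (‖T f b‖ ^ p) ∂ν
      ≤ ENNReal.ofReal (p * (4 / (p - 1) + 4 / (2 - p)) * (A / 2) ^ (2 - p))
        * eLpNorm f (ENNReal.ofReal p) μ ^ p := by
  set c := A / 2 with hc_def
  have hc : 0 < c := half_pos hA
  have hp0 : 0 < p := by linarith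
  have hXmeas : Measurable fun t => ENNReal.ofReal (2 * A)
      * (eLpNorm ({x | c * t < ‖f x‖}.indicator f) 1 μ * ENNReal.ofReal (t ^ (p - 2))) :=
    ((antitone_eLpNorm_indicator_lt_mul hc.le 1).measurable.mul (by fun_prop)).const_mul _
  have hconst : 2 * A * (c ^ (1 - p) / (p - 1)) = 4 / (p - 1) * c ^ (2 - p) := by
    rw [show 2 - p = 1 + (1 - p) by ring, Real.rpow_one_add' hc.le (by linarith), hc_def]
    ring
  calc ∫⁻ b, ENNReal.ofReal (‖T f b‖ ^ p) ∂ν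
      = ENNReal.ofReal p * ∫⁻ t in Ioi 0, ν {b | t < ‖T f b‖} * ENNReal.ofReal (t ^ (p - 1)) :=
        lintegral_rpow_eq_lintegral_meas_lt_mul ν (ae_of_all _ fun _ => norm_nonneg _) (hTm f) hp0
    _ ≤ ENNReal.ofReal p * ∫⁻ t in Ioi 0, (ENNReal.ofReal (2 * A)
          * (eLpNorm ({x | c * t < ‖f x‖}.indicator f) 1 μ * ENNReal.ofReal (t ^ (p - 2)))
        + 4 * (eLpNorm ({x | c * t < ‖f x‖}ᶜ.indicator f) 2 μ ^ 2
          * ENNReal.ofReal (t ^ (p - 3)))) :=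
        mul_le_mul_right (setLIntegral_mono' measurableSet_Ioi fun t ht =>
          measure_lt_norm_mul_rpow_le_of_weakTypeOneOne_of_strongTypeTwoTwo hTm hsub hweak
            hstrong hA.le hp1.le hp2.le hc ht hf) _
    _ = ENNReal.ofReal p * (ENNReal.ofReal (2 * A) * ENNReal.ofReal (c ^ (1 - p) / (p - 1))
          + 4 * ENNReal.ofReal (c ^ (2 - p) / (2 - p)))
          * ∫⁻ x, ENNReal.ofReal (‖f x‖ ^ p) ∂μ := by
        rw [lintegral_add_left hXmeas, lintegral_const_mul' _ _ ENNReal.ofReal_ne_top,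
          lintegral_const_mul' _ _ ENNReal.ofNat_ne_top,
          lintegral_Ioi_eLpNorm_indicator_lt_mul_rpow hf.1 hp1 hc,
          lintegral_Ioi_eLpNorm_indicator_compl_sq_mul_rpow hf.1 hp0 hp2 hc]
        ring
    _ = _ := by
        have h₁ : 0 ≤ c ^ (1 - p) / (p - 1) := div_nonneg (by positivity) (by linarith)
        have h₂ : 0 ≤ 4 * (c ^ (2 - p) / (2 - p)) :=
          mul_nonneg (by norm_num) (div_nonneg (by positivity) (by linarith))
        rw [eLpNorm_ofReal_rpow_eq_lintegral hp0, ← ENNReal.ofReal_ofNat 4,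
          ← ENNReal.ofReal_mul (by positivity), ← ENNReal.ofReal_mul (by norm_num),
          ← ENNReal.ofReal_add (mul_nonneg (by positivity) h₁) h₂,
          ← ENNReal.ofReal_mul hp0.le, hconst]
        congr 2
        ring

end Interpolation

lemma count_withDensity_apply {β : Type*} [MeasurableSpace β] [DiscreteMeasurableSpace β]
    (w : β → ℝ≥0∞) (S : Set β) : Measure.count.withDensity w S = ∑' b, S.indicator w b := by
  rw [withDensity_apply _ .of_discrete, ← lintegral_indicator .of_discrete, lintegral_count]

lemma lintegral_count_withDensity {β : Type*} [MeasurableSpace β] [DiscreteMeasurableSpace β]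
    (w g : β → ℝ≥0∞) : ∫⁻ b, g b ∂Measure.count.withDensity w = ∑' b, g b * w b := by
  rw [lintegral_withDensity_eq_lintegral_mul _ .of_discrete .of_discrete, lintegral_count]
  simp only [Pi.mul_apply, mul_comm]

theorem marcinkiewicz_paley_general {Ω : Type*} [MeasurableSpace Ω] (μ : Measure Ω)
    [SigmaFinite μ] (φ : ℕ → ℝ) (M : ℝ) (hMpos : 0 < M)
    (p : ℝ) (hp1 : 1 < p) (hp2 : p < 2)
    (T : (Ω → ℂ) → ℕ → ℂ)
    (hsub : ∀ f g : Ω → ℂ, ∀ n, ‖T (f + g) n‖ ≤ ‖T f n‖ + ‖T g n‖)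
    (hweak11 : ∀ f : Ω → ℂ, MemLp f 1 μ → ∀ y : ℝ, 0 < y →
      (∑' n : ℕ, if y < ‖T f n‖ then ENNReal.ofReal (φ n ^ 2) else 0)
        ≤ ENNReal.ofReal (2 * M) * eLpNorm f 1 μ / ENNReal.ofReal y)
    (hstrong22 : ∀ f : Ω → ℂ, MemLp f 2 μ →
      (∑' n : ℕ, ENNReal.ofReal (‖T f n‖ ^ 2 * φ n ^ 2)) ≤ (eLpNorm f 2 μ) ^ 2) :
    ∃ C : ℝ, 0 < C ∧ ∀ f : Ω → ℂ, MemLp f (ENNReal.ofReal p) μ →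
      (∑' n : ℕ, ENNReal.ofReal (‖T f n‖ ^ p * φ n ^ 2)) ^ (1 / p)
        ≤ ENNReal.ofReal (C * M ^ ((2 - p) / p)) * eLpNorm f (ENNReal.ofReal p) μ := by
  set ν : Measure ℕ := Measure.count.withDensity fun n => ENNReal.ofReal (φ n ^ 2) with hν_def
  have hν (g : ℕ → ℝ) (hg : 0 ≤ g) :
      ∫⁻ n, ENNReal.ofReal (g n) ∂ν = ∑' n, ENNReal.ofReal (g n * φ n ^ 2) := by
    rw [hν_def, lintegral_count_withDensity]
    simp_rw [ENNReal.ofReal_mul (hg _)]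
  have hweak : WeakTypeOneOne T μ ν (2 * M) := fun f hf y hy => by
    rw [hν_def, count_withDensity_apply]
    exact hweak11 f hf y hy
  have hstrong : StrongTypeTwoTwo T μ ν := fun f hf => by
    rw [hν _ fun _ => sq_nonneg _]
    exact hstrong22 f hf
  have hp0 : 0 < p := by linarith
  set K := p * (4 / (p - 1) + 4 / (2 - p))
  have hK : 0 < K :=
    mul_pos hp0 (add_pos (div_pos four_pos (by linarith)) (div_pos four_pos (by linarith)))
  refine ⟨K ^ (1 / p), Real.rpow_pos_of_pos hK _, fun f hf => ?_⟩
  have key := lintegral_rpow_norm_le_of_weakTypeOneOne_of_strongTypeTwoTwo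
    (fun _ => Measurable.of_discrete.aemeasurable) hsub hweak hstrong (by positivity) hp1 hp2 hf
  rw [hν _ fun _ => by positivity, show 2 * M / 2 = M by ring] at key
  calc (∑' n, ENNReal.ofReal (‖T f n‖ ^ p * φ n ^ 2)) ^ (1 / p)
      ≤ (ENNReal.ofReal (K * M ^ (2 - p)) * eLpNorm f (ENNReal.ofReal p) μ ^ p) ^ (1 / p) :=
        ENNReal.rpow_le_rpow key (by positivity)
    _ = _ := by
        rw [ENNReal.mul_rpow_of_nonneg _ _ (by positivity), ← ENNReal.rpow_mul,
          mul_one_div_cancel hp0.ne', ENNReal.rpow_one,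
          ENNReal.ofReal_rpow_of_nonneg (by positivity) (by positivity),
          Real.mul_rpow hK.le (by positivity), ← Real.rpow_mul hMpos.le, mul_one_div]

/-- Weighted Marcinkiewicz interpolation yielding the Paley
inequality: if the sublinear map `T` into sequences is of weak type `(1,1)` with
constant `2M` w.r.t. the measure `ν({n}) = φ(n)²` and of strong type `(2,2)`, then
for `1 < p < 2` it satisfies
`(∑ |Tf(n)|^p φ(n)²)^(1/p) ≤ C · M^((2-p)/p) · ‖f‖_p`. -/
theorem marcinkiewicz_paley {Ω : Type*} [MeasurableSpace Ω] (μ : Measure Ω)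
    [SigmaFinite μ] (φ : ℕ → ℝ) (hφ : ∀ n, 0 < φ n) (M : ℝ) (hMpos : 0 < M)
    (hfin : ∀ s : ℝ, 0 < s → {n : ℕ | s < φ n}.Finite)
    (hM : ∀ s : ℝ, 0 < s → s * ({n : ℕ | s < φ n}.ncard : ℝ) ≤ M)
    (p : ℝ) (hp1 : 1 < p) (hp2 : p < 2)
    (T : (Ω → ℂ) → ℕ → ℂ)
    (hsub : ∀ f g : Ω → ℂ, ∀ n, ‖T (f + g) n‖ ≤ ‖T f n‖ + ‖T g n‖)
    (hhom : ∀ (c : ℂ) (f : Ω → ℂ) (n : ℕ), ‖T (c • f) n‖ = ‖c‖ * ‖T f n‖)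
    (hweak11 : ∀ f : Ω → ℂ, MemLp f 1 μ → ∀ y : ℝ, 0 < y →
      (∑' n : ℕ, if y < ‖T f n‖ then ENNReal.ofReal (φ n ^ 2) else 0)
        ≤ ENNReal.ofReal (2 * M) * eLpNorm f 1 μ / ENNReal.ofReal y)
    (hstrong22 : ∀ f : Ω → ℂ, MemLp f 2 μ →
      (∑' n : ℕ, ENNReal.ofReal (‖T f n‖ ^ 2 * φ n ^ 2)) ≤ (eLpNorm f 2 μ) ^ 2) :
    ∃ C : ℝ, 0 < C ∧ ∀ f : Ω → ℂ, MemLp f (ENNReal.ofReal p) μ →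
      (∑' n : ℕ, ENNReal.ofReal (‖T f n‖ ^ p * φ n ^ 2)) ^ (1 / p)
        ≤ ENNReal.ofReal (C * M ^ ((2 - p) / p)) * eLpNorm f (ENNReal.ofReal p) μ :=
  marcinkiewicz_paley_general μ φ M hMpos p hp1 hp2 T hsub hweak11 hstrong22
end

section
/- Let H be a separable Hilbert space, (X,μ) a measure space, 0 < p₀ < p₁ < ∞, and φ : B_{p₀}(H) + B_{p₁}(H) → L⁰(X,μ) a sublinear operator such that ‖φ(T)‖_{L^{p_i,∞}(μ)} ≤ C_i ‖T‖_{B_{p_i}(H)} for all T ∈ B_{p_i}(H), i = 0,1. Then for every p with p₀ < p < p₁ there exists a constant C > 0 such that ‖φ(T)‖_{L^p(μ)} ≤ C ‖T‖_{B_p(H)} for all T ∈ B_p(H). -/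
/-!
Real-method interpolation, with the approximation numbers `Sₖ(T)` in the role of the decreasing
rearrangement. At height `t`, let `N = #{k : Sₖ(T) > t}` and cut `T` by a near-best approximation
`F` of rank `≤ N`: then `Sₖ(F) ≤ 3 Sₖ(T)` where `Sₖ(T) > t` and `Sₖ(F) = 0` elsewhere, while
`Sₖ(T - F) ≤ 2 min(t, Sₖ(T))` for `k < N` and `S_{k+N}(T - F) ≤ 2 min(t, Sₖ(T))`.
Sublinearity and the two weak-type bounds therefore give
`μ {|φ T| > t} ≲ t^{-p₀} ∑_{Sₖ(T) > t} Sₖ(T)^{p₀} + t^{-p₁} ∑ₖ min(t, Sₖ(T))^{p₁}`.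
Multiplying by `t^p`, summing over dyadic `t = 2ʲ` and exchanging the sums, the geometric
series in `j` (convergent because `p₀ < p < p₁`) leave `∑ₖ Sₖ(T)^p`. As `φ T` is not assumed
measurable, the dyadic layer-cake bound is taken over measurable hulls of the level sets.
-/

open MeasureTheory
open scoped ENNReal

variable {H : Type*} [NormedAddCommGroup H] [InnerProductSpace ℂ H] [CompleteSpace H]

/-- The Schatten `p`-norm `(∑ₙ Sₙ(T)^p)^(1/p)` (valued in `ℝ≥0∞`). -/
noncomputable def schattenNorm (p : ℝ) (T : H →L[ℂ] H) : ℝ≥0∞ :=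
  (∑' n : ℕ, ENNReal.ofReal (appNumber T n) ^ p) ^ (1 / p)

set_option linter.unusedSectionVars false

lemma finiteDimensional_range_zero :
    FiniteDimensional ℂ (LinearMap.range ((0 : H →L[ℂ] H) : H →ₗ[ℂ] H)) := by
  rw [ContinuousLinearMap.toLinearMap_zero, LinearMap.range_zero]; infer_instance

lemma finrank_range_zero :
    Module.finrank ℂ (LinearMap.range ((0 : H →L[ℂ] H) : H →ₗ[ℂ] H)) = 0 := by
  rw [ContinuousLinearMap.toLinearMap_zero, LinearMap.range_zero, finrank_bot]

namespace appNumber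

variable (T : H →L[ℂ] H) (n : ℕ)

lemma nonneg : 0 ≤ appNumber T n :=
  Real.sInf_nonneg (by rintro r ⟨F, -, -, rfl⟩; exact norm_nonneg _)

variable {T n} in
lemma le_norm_sub {F : H →L[ℂ] H} (hF : FiniteDimensional ℂ (LinearMap.range (F : H →ₗ[ℂ] H)))
    (hFn : Module.finrank ℂ (LinearMap.range (F : H →ₗ[ℂ] H)) ≤ n) :
    appNumber T n ≤ ‖T - F‖ :=
  csInf_le ⟨0, by rintro r ⟨F, -, -, rfl⟩; exact norm_nonneg _⟩ ⟨F, hF, hFn, rfl⟩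

lemma le_norm : appNumber T n ≤ ‖T‖ := by
  simpa using le_norm_sub (T := T) finiteDimensional_range_zero
    (finrank_range_zero.trans_le n.zero_le)

lemma exists_norm_sub_lt {ε : ℝ} (hε : 0 < ε) :
    ∃ F : H →L[ℂ] H, FiniteDimensional ℂ (LinearMap.range (F : H →ₗ[ℂ] H)) ∧
      Module.finrank ℂ (LinearMap.range (F : H →ₗ[ℂ] H)) ≤ n ∧
      ‖T - F‖ < appNumber T n + ε := by
  have hne : {r : ℝ | ∃ F : H →L[ℂ] H,
      FiniteDimensional ℂ (LinearMap.range (F : H →ₗ[ℂ] H)) ∧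
      Module.finrank ℂ (LinearMap.range (F : H →ₗ[ℂ] H)) ≤ n ∧ ‖T - F‖ = r}.Nonempty :=
    ⟨_, 0, finiteDimensional_range_zero, finrank_range_zero.trans_le n.zero_le, rfl⟩
  obtain ⟨_, ⟨F, hF, hFn, rfl⟩, hTF⟩ := exists_lt_of_csInf_lt hne (lt_add_of_pos_right _ hε)
  exact ⟨F, hF, hFn, hTF⟩

lemma antitone : Antitone (appNumber T) := by
  intro m n hmn
  refine le_of_forall_pos_lt_add fun ε hε => ?_
  obtain ⟨F, hF, hFm, hTF⟩ := exists_norm_sub_lt T m hε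
  exact (le_norm_sub hF (hFm.trans hmn)).trans_lt hTF

lemma le_add_norm_sub (S : H →L[ℂ] H) : appNumber S n ≤ appNumber T n + ‖S - T‖ := by
  refine le_of_forall_pos_lt_add fun ε hε => ?_
  obtain ⟨F, hF, hFn, hTF⟩ := exists_norm_sub_lt T n hε
  calc appNumber S n ≤ ‖S - F‖ := le_norm_sub hF hFn
    _ ≤ ‖S - T‖ + ‖T - F‖ := norm_sub_le_norm_sub_add_norm_sub S T F
    _ < appNumber T n + ‖S - T‖ + ε := by linarith

variable {T n} in
lemma eq_zero_of_finrank_le (hT : FiniteDimensional ℂ (LinearMap.range (T : H →ₗ[ℂ] H)))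
    (hTn : Module.finrank ℂ (LinearMap.range (T : H →ₗ[ℂ] H)) ≤ n) : appNumber T n = 0 :=
  le_antisymm (by simpa using le_norm_sub (T := T) hT hTn) (nonneg T n)

lemma sub_add_le {F : H →L[ℂ] H} {N : ℕ}
    (hF : FiniteDimensional ℂ (LinearMap.range (F : H →ₗ[ℂ] H)))
    (hFN : Module.finrank ℂ (LinearMap.range (F : H →ₗ[ℂ] H)) ≤ N) :
    appNumber (T - F) (n + N) ≤ appNumber T n := by
  refine le_of_forall_pos_lt_add fun ε hε => ?_
  obtain ⟨G, hG, hGn, hTG⟩ := exists_norm_sub_lt T n hε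
  have hrange : LinearMap.range ((G - F : H →L[ℂ] H) : H →ₗ[ℂ] H) ≤
      LinearMap.range (G : H →ₗ[ℂ] H) ⊔ LinearMap.range (F : H →ₗ[ℂ] H) := by
    rw [ContinuousLinearMap.toLinearMap_sub, sub_eq_add_neg, ← LinearMap.range_neg (F : H →ₗ[ℂ] H)]
    exact LinearMap.range_add_le _ _
  have : FiniteDimensional ℂ (LinearMap.range ((G - F : H →L[ℂ] H) : H →ₗ[ℂ] H)) :=
    Submodule.finiteDimensional_of_le hrange
  have hrank : Module.finrank ℂ (LinearMap.range ((G - F : H →L[ℂ] H) : H →ₗ[ℂ] H)) ≤ n + N :=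
    (Submodule.finrank_mono hrange).trans <|
      (Submodule.finrank_add_le_finrank_add_finrank _ _).trans (add_le_add hGn hFN)
  calc appNumber (T - F) (n + N) ≤ ‖T - F - (G - F)‖ := le_norm_sub this hrank
    _ = ‖T - G‖ := by rw [sub_sub_sub_cancel_right]
    _ < appNumber T n + ε := hTG

end appNumber

lemma isCompactOperator_of_finiteDimensional_range {F : H →L[ℂ] H}
    (hF : FiniteDimensional ℂ (LinearMap.range (F : H →ₗ[ℂ] H))) : IsCompactOperator F :=
  (isCompactOperator_of_locallyCompactSpace_dom
    (F.codRestrict (LinearMap.range (F : H →ₗ[ℂ] H)) fun x => ⟨x, rfl⟩)).clm_comp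
    (LinearMap.range (F : H →ₗ[ℂ] H)).subtypeL

noncomputable def schattenSum (p : ℝ) (T : H →L[ℂ] H) : ℝ≥0∞ :=
  ∑' n : ℕ, ENNReal.ofReal (appNumber T n) ^ p

lemma schattenNorm_rpow {p : ℝ} (hp : p ≠ 0) (T : H →L[ℂ] H) :
    schattenNorm p T ^ p = schattenSum p T := by
  rw [schattenNorm, ← ENNReal.rpow_mul, one_div_mul_cancel hp, ENNReal.rpow_one, schattenSum]

lemma schattenNorm_lt_top_iff {p : ℝ} (hp : 0 < p) {T : H →L[ℂ] H} :
    schattenNorm p T < ⊤ ↔ schattenSum p T ≠ ⊤ := by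
  rw [schattenNorm, ENNReal.rpow_lt_top_iff_of_pos (by positivity), lt_top_iff_ne_top,
    schattenSum]

lemma schattenSum_ne_top_of_finiteDimensional_range {p : ℝ} (hp : 0 < p) {F : H →L[ℂ] H}
    (hF : FiniteDimensional ℂ (LinearMap.range (F : H →ₗ[ℂ] H))) : schattenSum p F ≠ ⊤ := by
  rw [schattenSum, tsum_eq_sum (s := Finset.range (Module.finrank ℂ (LinearMap.range
    (F : H →ₗ[ℂ] H)))) fun k hk => ?_]
  · exact ENNReal.sum_ne_top.2 fun k _ => by finiteness
  · rw [appNumber.eq_zero_of_finrank_le hF (by simpa using hk), ENNReal.ofReal_zero,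
      ENNReal.zero_rpow_of_pos hp]

lemma exists_le_of_tsum_rpow_ne_top {a : ℕ → ℝ} {p : ℝ} (hp : 0 < p)
    (ha : ∑' n, ENNReal.ofReal (a n) ^ p ≠ ⊤) {t : ℝ} (ht : 0 < t) : ∃ n, a n ≤ t := by
  by_contra! h
  have hsum : ∑' _ : ℕ, ENNReal.ofReal t ^ p ≤ ∑' n, ENNReal.ofReal (a n) ^ p :=
    ENNReal.tsum_le_tsum fun n => ENNReal.rpow_le_rpow (ENNReal.ofReal_le_ofReal (h n).le) hp.le
  rw [ENNReal.tsum_const_eq_top_of_ne_zero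
    (ENNReal.rpow_pos (ENNReal.ofReal_pos.2 ht) ENNReal.ofReal_ne_top).ne'] at hsum
  exact ha (top_le_iff.1 hsum)

lemma exists_finiteRank_split (T : H →L[ℂ] H) {t : ℝ} (ht : 0 < t)
    (hT : ∃ n, appNumber T n ≤ t) :
    ∃ F : H →L[ℂ] H, FiniteDimensional ℂ (LinearMap.range (F : H →ₗ[ℂ] H)) ∧
      (∀ k, appNumber F k ≤ 3 * appNumber T k) ∧
      (∀ k, appNumber T k ≤ t → appNumber F k = 0) ∧
      ∃ N, (∀ k < N, appNumber (T - F) k ≤ 2 * min t (appNumber T k)) ∧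
        ∀ k, appNumber (T - F) (k + N) ≤ 2 * min t (appNumber T k) := by
  classical
  set N := Nat.find hT
  have hlt : ∀ k < N, t < appNumber T k := fun k hk => not_le.1 (Nat.find_min hT hk)
  obtain ⟨F, hF, hFN, hTF⟩ := appNumber.exists_norm_sub_lt T N ht
  have hR : ‖T - F‖ ≤ 2 * t := by linarith [Nat.find_spec hT]
  have hF0 : ∀ k, appNumber T k ≤ t → appNumber F k = 0 := fun k hk =>
    appNumber.eq_zero_of_finrank_le hF (hFN.trans (Nat.find_min' hT hk))
  refine ⟨F, hF, fun k => ?_, hF0, N, fun k hk => ?_, fun k => ?_⟩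
  · rcases le_or_gt (appNumber T k) t with hk | hk
    · rw [hF0 k hk]
      linarith [appNumber.nonneg T k]
    · calc appNumber F k ≤ appNumber T k + ‖F - T‖ := appNumber.le_add_norm_sub T k F
        _ ≤ 3 * appNumber T k := by rw [norm_sub_rev]; linarith
  · calc appNumber (T - F) k ≤ ‖T - F‖ := appNumber.le_norm _ _
      _ ≤ 2 * t := hR
      _ = 2 * min t (appNumber T k) := by rw [min_eq_left (hlt k hk).le]
  · calc appNumber (T - F) (k + N) ≤ min (2 * t) (appNumber T k) :=
          le_min ((appNumber.le_norm _ _).trans hR) (appNumber.sub_add_le T k hF hFN)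
      _ ≤ 2 * min t (appNumber T k) := by
          rw [mul_min_of_nonneg _ _ zero_le_two]
          exact min_le_min_left _ (by linarith [appNumber.nonneg T k])

noncomputable def dyadicSumConst (r : ℝ) : ℝ≥0∞ := (1 - 2 ^ (-r))⁻¹

lemma dyadicSumConst_ne_top {r : ℝ} (hr : 0 < r) : dyadicSumConst r ≠ ⊤ := by
  have : (2 : ℝ≥0∞) ^ (-r) < 1 :=
    ENNReal.rpow_lt_one_of_one_lt_of_neg ENNReal.one_lt_two (neg_lt_zero.2 hr)
  exact ENNReal.inv_ne_top.2 (tsub_pos_of_lt this).ne'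

lemma ofReal_two_zpow_rpow (j : ℤ) (r : ℝ) :
    ENNReal.ofReal ((2 : ℝ) ^ j) ^ r = 2 ^ ((j : ℝ) * r) := by
  rw [← Real.rpow_intCast, ← ENNReal.ofReal_rpow_of_pos two_pos, ENNReal.ofReal_ofNat,
    ENNReal.rpow_mul]

lemma tsum_ite_le_two_rpow (r : ℝ) (J : ℤ) :
    ∑' j : ℤ, (if j ≤ J then (2 : ℝ≥0∞) ^ ((j : ℝ) * r) else 0) =
      2 ^ ((J : ℝ) * r) * dyadicSumConst r := by
  have hsupp : Function.support (fun j : ℤ => if j ≤ J then (2 : ℝ≥0∞) ^ ((j : ℝ) * r) else 0)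
      ⊆ Set.range (fun n : ℕ => J - n) := fun j hj =>
    have : j ≤ J := by by_contra h; exact hj (if_neg h)
    ⟨(J - j).toNat, by dsimp only; omega⟩
  rw [← (sub_right_injective.comp Nat.cast_injective).tsum_eq hsupp, dyadicSumConst,
    ← ENNReal.tsum_geometric, ← ENNReal.tsum_mul_left]
  refine tsum_congr fun n => ?_
  simp only [Function.comp_apply, sub_le_self_iff, Nat.cast_nonneg, if_true]
  rw [← ENNReal.rpow_mul_natCast, ← ENNReal.rpow_add _ _ two_ne_zero ENNReal.ofNat_ne_top]
  push_cast
  ring_nf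

lemma tsum_ite_ge_two_rpow_neg (r : ℝ) (J : ℤ) :
    ∑' j : ℤ, (if J ≤ j then (2 : ℝ≥0∞) ^ (-((j : ℝ) * r)) else 0) =
      2 ^ (-((J : ℝ) * r)) * dyadicSumConst r := by
  have hsupp : Function.support (fun j : ℤ => if J ≤ j then (2 : ℝ≥0∞) ^ (-((j : ℝ) * r)) else 0)
      ⊆ Set.range (fun n : ℕ => J + n) := fun j hj =>
    have : J ≤ j := by by_contra h; exact hj (if_neg h)
    ⟨(j - J).toNat, by dsimp only; omega⟩
  rw [← ((add_right_injective J).comp Nat.cast_injective).tsum_eq hsupp, dyadicSumConst,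
    ← ENNReal.tsum_geometric, ← ENNReal.tsum_mul_left]
  refine tsum_congr fun n => ?_
  simp only [Function.comp_apply, le_add_iff_nonneg_right, Nat.cast_nonneg, if_true]
  rw [← ENNReal.rpow_mul_natCast, ← ENNReal.rpow_add _ _ two_ne_zero ENNReal.ofNat_ne_top]
  push_cast
  ring_nf

lemma tsum_ite_zpow_lt_rpow_le {r : ℝ} (hr : 0 < r) (c : ℝ) :
    ∑' j : ℤ, (if (2 : ℝ) ^ j < c then ENNReal.ofReal (2 ^ j) ^ r else 0) ≤
      dyadicSumConst r * ENNReal.ofReal c ^ r := by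
  rcases le_or_gt c 0 with hc | hc
  · have : ∀ j : ℤ, ¬ (2 : ℝ) ^ j < c := fun j h => lt_asymm (zpow_pos two_pos j) (h.trans_le hc)
    simp [this]
  obtain ⟨J, hJc, hcJ⟩ := exists_mem_Ioc_zpow hc one_lt_two
  calc _ ≤ ∑' j : ℤ, (if j ≤ J then (2 : ℝ≥0∞) ^ ((j : ℝ) * r) else 0) := by
        refine ENNReal.tsum_le_tsum fun j => ?_
        split_ifs with hjc hjJ
        · rw [ofReal_two_zpow_rpow]
        · have := (zpow_lt_zpow_iff_right₀ one_lt_two).1 (hjc.trans_le hcJ)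
          omega
        · exact zero_le
        · exact le_rfl
    _ = 2 ^ ((J : ℝ) * r) * dyadicSumConst r := tsum_ite_le_two_rpow r J
    _ ≤ dyadicSumConst r * ENNReal.ofReal c ^ r := by
        rw [mul_comm, ← ofReal_two_zpow_rpow]
        gcongr

lemma tsum_ite_le_zpow_rpow_neg_le {r : ℝ} (hr : 0 < r) {c : ℝ} (hc : 0 < c) :
    ∑' j : ℤ, (if c ≤ (2 : ℝ) ^ j then ENNReal.ofReal (2 ^ j) ^ (-r) else 0) ≤
      dyadicSumConst r * ENNReal.ofReal c ^ (-r) := by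
  obtain ⟨J, hJc, hcJ⟩ := exists_mem_Ioc_zpow hc one_lt_two
  calc _ ≤ ∑' j : ℤ, (if J + 1 ≤ j then (2 : ℝ≥0∞) ^ (-((j : ℝ) * r)) else 0) := by
        refine ENNReal.tsum_le_tsum fun j => ?_
        split_ifs with hcj hjJ
        · rw [ofReal_two_zpow_rpow, mul_neg]
        · have := (zpow_lt_zpow_iff_right₀ one_lt_two).1 (hJc.trans_le hcj)
          omega
        · exact zero_le
        · exact le_rfl
    _ = 2 ^ (-(((J + 1 : ℤ) : ℝ) * r)) * dyadicSumConst r := tsum_ite_ge_two_rpow_neg r (J + 1)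
    _ ≤ dyadicSumConst r * ENNReal.ofReal c ^ (-r) := by
        rw [mul_comm, ← mul_neg, ← ofReal_two_zpow_rpow, ENNReal.rpow_neg, ENNReal.rpow_neg]
        gcongr

lemma tsum_rpow_mul_ite_lt_le {p q : ℝ} (hqp : q < p) (c : ℝ) :
    ∑' j : ℤ, ENNReal.ofReal (2 ^ j) ^ (p - q) *
        (if (2 : ℝ) ^ j < c then ENNReal.ofReal c ^ q else 0) ≤
      dyadicSumConst (p - q) * ENNReal.ofReal c ^ p := by
  rcases le_or_gt c 0 with hc | hc
  · have : ∀ j : ℤ, ¬ (2 : ℝ) ^ j < c := fun j h => lt_asymm (zpow_pos two_pos j) (h.trans_le hc)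
    simp [this]
  calc _ = (∑' j : ℤ, if (2 : ℝ) ^ j < c then ENNReal.ofReal (2 ^ j) ^ (p - q) else 0) *
        ENNReal.ofReal c ^ q := by
        rw [← ENNReal.tsum_mul_right]
        exact tsum_congr fun j => by split_ifs <;> simp
    _ ≤ dyadicSumConst (p - q) * ENNReal.ofReal c ^ (p - q) * ENNReal.ofReal c ^ q := by
        gcongr
        exact tsum_ite_zpow_lt_rpow_le (sub_pos.2 hqp) c
    _ = dyadicSumConst (p - q) * ENNReal.ofReal c ^ p := by
        rw [mul_assoc, ← ENNReal.rpow_add _ _ (ENNReal.ofReal_pos.2 hc).ne' ENNReal.ofReal_ne_top,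
          sub_add_cancel]

lemma tsum_rpow_mul_min_rpow_le {p q : ℝ} (hp : 0 < p) (hpq : p < q) (c : ℝ) :
    ∑' j : ℤ, ENNReal.ofReal (2 ^ j) ^ (p - q) * ENNReal.ofReal (min (2 ^ j) c) ^ q ≤
      (dyadicSumConst p + dyadicSumConst (q - p)) * ENNReal.ofReal c ^ p := by
  rcases le_or_gt c 0 with hc | hc
  · have : ∀ j : ℤ, ENNReal.ofReal (min (2 ^ j) c) = 0 := fun j =>
      ENNReal.ofReal_eq_zero.2 ((min_le_right _ _).trans hc)
    simp [this, ENNReal.zero_rpow_of_pos (hp.trans hpq)]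
  have hsplit : ∀ j : ℤ,
      ENNReal.ofReal (2 ^ j) ^ (p - q) * ENNReal.ofReal (min (2 ^ j) c) ^ q =
        (if (2 : ℝ) ^ j < c then ENNReal.ofReal (2 ^ j) ^ p else 0) +
          (if c ≤ (2 : ℝ) ^ j then ENNReal.ofReal (2 ^ j) ^ (-(q - p)) else 0) *
            ENNReal.ofReal c ^ q := by
    intro j
    have h2j : ENNReal.ofReal ((2 : ℝ) ^ j) ≠ 0 :=
      (ENNReal.ofReal_pos.2 (zpow_pos two_pos j)).ne'
    split_ifs with hjc hcj hcj
    · exact absurd (hcj.trans_lt hjc) (lt_irrefl c)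
    · rw [min_eq_left hjc.le, ← ENNReal.rpow_add _ _ h2j ENNReal.ofReal_ne_top, sub_add_cancel,
        zero_mul, add_zero]
    · rw [min_eq_right hcj, zero_add, neg_sub]
    · exact absurd (le_of_not_gt hjc) hcj
  rw [tsum_congr hsplit, ENNReal.tsum_add, ENNReal.tsum_mul_right]
  calc _ ≤ dyadicSumConst p * ENNReal.ofReal c ^ p +
        dyadicSumConst (q - p) * ENNReal.ofReal c ^ (-(q - p)) * ENNReal.ofReal c ^ q := by
        gcongr
        · exact tsum_ite_zpow_lt_rpow_le hp c
        · exact tsum_ite_le_zpow_rpow_neg_le (sub_pos.2 hpq) hc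
    _ = (dyadicSumConst p + dyadicSumConst (q - p)) * ENNReal.ofReal c ^ p := by
        rw [mul_assoc, ← ENNReal.rpow_add _ _ (ENNReal.ofReal_pos.2 hc).ne' ENNReal.ofReal_ne_top,
          neg_sub, sub_add_cancel, add_mul]

noncomputable def rpowSumAbove (a : ℕ → ℝ) (t q : ℝ) : ℝ≥0∞ :=
  ∑' k, if t < a k then ENNReal.ofReal (a k) ^ q else 0

noncomputable def rpowSumMin (a : ℕ → ℝ) (t q : ℝ) : ℝ≥0∞ :=
  ∑' k, ENNReal.ofReal (min t (a k)) ^ q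

lemma rpowSumMin_le {a : ℕ → ℝ} (t : ℝ) {p q : ℝ} (hp : 0 ≤ p) (hpq : p ≤ q) :
    rpowSumMin a t q ≤ ENNReal.ofReal t ^ (q - p) * ∑' k, ENNReal.ofReal (a k) ^ p := by
  rw [rpowSumMin, ← ENNReal.tsum_mul_left]
  refine ENNReal.tsum_le_tsum fun k => ?_
  calc ENNReal.ofReal (min t (a k)) ^ q
      = ENNReal.ofReal (min t (a k)) ^ (q - p) * ENNReal.ofReal (min t (a k)) ^ p := by
        rw [← ENNReal.rpow_add_of_nonneg _ _ (sub_nonneg.2 hpq) hp, sub_add_cancel]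
    _ ≤ ENNReal.ofReal t ^ (q - p) * ENNReal.ofReal (a k) ^ p := by
        gcongr
        · exact min_le_left _ _
        · exact min_le_right _ _

lemma tsum_le_two_mul_of_le_of_add_le {u v : ℕ → ℝ≥0∞} (N : ℕ) (h₁ : ∀ k < N, u k ≤ v k)
    (h₂ : ∀ k, u (k + N) ≤ v k) : ∑' k, u k ≤ 2 * ∑' k, v k := by
  rw [← ENNReal.summable.sum_add_tsum_nat_add' (k := N), two_mul]
  gcongr with i
  · exact (Finset.sum_le_sum fun k hk => h₁ k (Finset.mem_range.1 hk)).trans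
      (ENNReal.sum_le_tsum _)
  · exact h₂ i

lemma tsum_rpow_le_mul_rpowSumAbove {a b : ℕ → ℝ} {c t q : ℝ} (hc : 0 ≤ c) (hq : 0 < q)
    (hb : ∀ k, b k ≤ c * a k) (hb0 : ∀ k, a k ≤ t → b k = 0) :
    ∑' k, ENNReal.ofReal (b k) ^ q ≤ ENNReal.ofReal c ^ q * rpowSumAbove a t q := by
  rw [rpowSumAbove, ← ENNReal.tsum_mul_left]
  refine ENNReal.tsum_le_tsum fun k => ?_
  split_ifs with hk
  · rw [← ENNReal.mul_rpow_of_nonneg _ _ hq.le, ← ENNReal.ofReal_mul hc]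
    gcongr
    exact hb k
  · rw [hb0 k (not_lt.1 hk), ENNReal.ofReal_zero, ENNReal.zero_rpow_of_pos hq, mul_zero]

lemma tsum_rpow_le_mul_rpowSumMin {a b : ℕ → ℝ} {c t q : ℝ} (hc : 0 ≤ c) (hq : 0 < q) (N : ℕ)
    (h₁ : ∀ k < N, b k ≤ c * min t (a k)) (h₂ : ∀ k, b (k + N) ≤ c * min t (a k)) :
    ∑' k, ENNReal.ofReal (b k) ^ q ≤ 2 * ENNReal.ofReal c ^ q * rpowSumMin a t q := by
  have hle : ∀ {k m}, b m ≤ c * min t (a k) →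
      ENNReal.ofReal (b m) ^ q ≤ ENNReal.ofReal c ^ q * ENNReal.ofReal (min t (a k)) ^ q :=
    fun h => by
      rw [← ENNReal.mul_rpow_of_nonneg _ _ hq.le, ← ENNReal.ofReal_mul hc]
      gcongr
  rw [mul_assoc, rpowSumMin, ← ENNReal.tsum_mul_left]
  exact tsum_le_two_mul_of_le_of_add_le N (fun k hk => hle (h₁ k hk)) fun k => hle (h₂ k)

section Measure

variable {Ω : Type*} [MeasurableSpace Ω] (μ : Measure Ω)

lemma lintegral_rpow_le_tsum_zpow_mul_measure {p : ℝ} (hp : 0 < p) (f : Ω → ℝ) :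
    ∫⁻ x, ENNReal.ofReal |f x| ^ p ∂μ ≤
      2 ^ p * ∑' j : ℤ, ENNReal.ofReal (2 ^ j) ^ p * μ {x | (2 : ℝ) ^ j < |f x|} := by
  set M : ℤ → Set Ω := fun j => toMeasurable μ {x | (2 : ℝ) ^ j < |f x|}
  have hpt : ∀ x, ENNReal.ofReal |f x| ^ p ≤
      2 ^ p * ∑' j : ℤ, (M j).indicator (fun _ => ENNReal.ofReal (2 ^ j) ^ p) x := by
    intro x
    rcases (abs_nonneg (f x)).eq_or_lt with h0 | hpos
    · rw [← h0, ENNReal.ofReal_zero, ENNReal.zero_rpow_of_pos hp]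
      exact zero_le
    obtain ⟨J, hJ, hJ1⟩ := exists_mem_Ioc_zpow hpos one_lt_two
    calc ENNReal.ofReal |f x| ^ p ≤ ENNReal.ofReal (2 ^ (J + 1)) ^ p := by gcongr
      _ = 2 ^ p * ENNReal.ofReal (2 ^ J) ^ p := by
          rw [zpow_add_one₀ two_ne_zero, mul_comm, ENNReal.ofReal_mul zero_le_two,
            ENNReal.ofReal_ofNat, ENNReal.mul_rpow_of_nonneg _ _ hp.le]
      _ = 2 ^ p * (M J).indicator (fun _ => ENNReal.ofReal (2 ^ J) ^ p) x := by
          rw [Set.indicator_of_mem (subset_toMeasurable μ _ hJ : x ∈ M J)]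
      _ ≤ 2 ^ p * ∑' j : ℤ, (M j).indicator (fun _ => ENNReal.ofReal (2 ^ j) ^ p) x := by
          gcongr
          exact ENNReal.le_tsum J
  calc _ ≤ ∫⁻ x, 2 ^ p * ∑' j : ℤ, (M j).indicator (fun _ => ENNReal.ofReal (2 ^ j) ^ p) x ∂μ :=
        lintegral_mono hpt
    _ = _ := by
        rw [lintegral_const_mul' _ _ (by finiteness),
          lintegral_tsum fun j => aemeasurable_const.indicator (measurableSet_toMeasurable _ _)]
        simp_rw [lintegral_indicator_const (measurableSet_toMeasurable _ _),
          measure_toMeasurable]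

variable {μ}

lemma measure_lt_abs_le_add_of_ae_le {f g h : Ω → ℝ} (hfgh : ∀ᵐ x ∂μ, |f x| ≤ |g x| + |h x|)
    (t : ℝ) : μ {x | t < |f x|} ≤ μ {x | t / 2 < |g x|} + μ {x | t / 2 < |h x|} := by
  refine (measure_mono_ae ?_).trans (measure_union_le _ _)
  filter_upwards [hfgh] with x hx hxt
  change t < |f x| at hxt
  change t / 2 < |g x| ∨ t / 2 < |h x|
  by_contra! hcon
  linarith

lemma measure_lt_abs_le_of_iSup_le {g : Ω → ℝ} {q : ℝ} (hq : 0 < q) {M : ℝ≥0∞}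
    (h : ⨆ (s : ℝ) (_ : 0 < s), ENNReal.ofReal s * μ {x | s < |g x|} ^ (1 / q) ≤ M)
    {s : ℝ} (hs : 0 < s) : μ {x | s < |g x|} ≤ M ^ q * ENNReal.ofReal s ^ (-q) := by
  have hs0 : ENNReal.ofReal s ≠ 0 := (ENNReal.ofReal_pos.2 hs).ne'
  have hM : μ {x | s < |g x|} ^ (1 / q) ≤ M * (ENNReal.ofReal s)⁻¹ := by
    rw [← div_eq_mul_inv, ENNReal.le_div_iff_mul_le (Or.inl hs0) (Or.inl ENNReal.ofReal_ne_top),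
      mul_comm]
    exact (le_iSup₂ (f := fun (s : ℝ) (_ : 0 < s) =>
      ENNReal.ofReal s * μ {x | s < |g x|} ^ (1 / q)) s hs).trans h
  calc μ {x | s < |g x|} = (μ {x | s < |g x|} ^ (1 / q)) ^ q := by
        rw [← ENNReal.rpow_mul, one_div_mul_cancel hq.ne', ENNReal.rpow_one]
    _ ≤ (M * (ENNReal.ofReal s)⁻¹) ^ q := by gcongr
    _ = M ^ q * ENNReal.ofReal s ^ (-q) := by
        rw [ENNReal.mul_rpow_of_nonneg _ _ hq.le, ENNReal.inv_rpow, ENNReal.rpow_neg]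

theorem lintegral_rpow_le_of_measure_lt_le {p₀ p p₁ : ℝ} (hp : 0 < p) (hp₀p : p₀ < p)
    (hpp₁ : p < p₁) {f : Ω → ℝ} {a : ℕ → ℝ} {A B : ℝ≥0∞}
    (h : ∀ j : ℤ, μ {x | (2 : ℝ) ^ j < |f x|} ≤
      A * ENNReal.ofReal (2 ^ j) ^ (-p₀) * rpowSumAbove a (2 ^ j) p₀ +
        B * ENNReal.ofReal (2 ^ j) ^ (-p₁) * rpowSumMin a (2 ^ j) p₁) :
    ∫⁻ x, ENNReal.ofReal |f x| ^ p ∂μ ≤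
      2 ^ p * (A * dyadicSumConst (p - p₀) + B * (dyadicSumConst p + dyadicSumConst (p₁ - p))) *
        ∑' k, ENNReal.ofReal (a k) ^ p := by
  have hw : ∀ (j : ℤ) (q : ℝ), ENNReal.ofReal (2 ^ j) ^ p * ENNReal.ofReal (2 ^ j) ^ (-q) =
      ENNReal.ofReal (2 ^ j) ^ (p - q) := fun j q => by
    rw [← ENNReal.rpow_add _ _ (ENNReal.ofReal_pos.2 (zpow_pos two_pos j)).ne'
      ENNReal.ofReal_ne_top, sub_eq_add_neg]
  have hlevel : ∀ j : ℤ, ENNReal.ofReal (2 ^ j) ^ p * μ {x | (2 : ℝ) ^ j < |f x|} ≤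
      A * ∑' k, ENNReal.ofReal (2 ^ j) ^ (p - p₀) *
          (if (2 : ℝ) ^ j < a k then ENNReal.ofReal (a k) ^ p₀ else 0) +
        B * ∑' k, ENNReal.ofReal (2 ^ j) ^ (p - p₁) * ENNReal.ofReal (min (2 ^ j) (a k)) ^ p₁ := by
    intro j
    calc _ ≤ ENNReal.ofReal (2 ^ j) ^ p *
          (A * ENNReal.ofReal (2 ^ j) ^ (-p₀) * rpowSumAbove a (2 ^ j) p₀ +
            B * ENNReal.ofReal (2 ^ j) ^ (-p₁) * rpowSumMin a (2 ^ j) p₁) := by gcongr; exact h j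
      _ = _ := by
        rw [rpowSumAbove, rpowSumMin, ENNReal.tsum_mul_left, ENNReal.tsum_mul_left, ← hw j p₀,
          ← hw j p₁]
        ring
  calc _ ≤ 2 ^ p * ∑' j : ℤ, ENNReal.ofReal (2 ^ j) ^ p * μ {x | (2 : ℝ) ^ j < |f x|} :=
        lintegral_rpow_le_tsum_zpow_mul_measure μ hp f
    _ ≤ 2 ^ p * ∑' j : ℤ, (A * ∑' k, ENNReal.ofReal (2 ^ j) ^ (p - p₀) *
            (if (2 : ℝ) ^ j < a k then ENNReal.ofReal (a k) ^ p₀ else 0) +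
          B * ∑' k, ENNReal.ofReal (2 ^ j) ^ (p - p₁) *
            ENNReal.ofReal (min (2 ^ j) (a k)) ^ p₁) := by
        gcongr with j
        exact hlevel j
    _ = 2 ^ p * (A * ∑' k, ∑' j : ℤ, ENNReal.ofReal (2 ^ j) ^ (p - p₀) *
            (if (2 : ℝ) ^ j < a k then ENNReal.ofReal (a k) ^ p₀ else 0) +
          B * ∑' k, ∑' j : ℤ, ENNReal.ofReal (2 ^ j) ^ (p - p₁) *
            ENNReal.ofReal (min (2 ^ j) (a k)) ^ p₁) := by
        rw [ENNReal.tsum_add, ENNReal.tsum_mul_left, ENNReal.tsum_mul_left]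
        congr 3 <;> exact ENNReal.tsum_comm
    _ ≤ 2 ^ p * (A * ∑' k, dyadicSumConst (p - p₀) * ENNReal.ofReal (a k) ^ p +
          B * ∑' k, (dyadicSumConst p + dyadicSumConst (p₁ - p)) * ENNReal.ofReal (a k) ^ p) := by
        gcongr with k k
        · exact tsum_rpow_mul_ite_lt_le hp₀p (a k)
        · exact tsum_rpow_mul_min_rpow_le hp hpp₁ (a k)
    _ = _ := by
        rw [ENNReal.tsum_mul_left, ENNReal.tsum_mul_left]
        ring

end Measure

section Interpolation

variable {Ω : Type*} [MeasurableSpace Ω] {μ : Measure Ω} {φ : (H →L[ℂ] H) → Ω → ℝ}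

/-- `‖φ T‖_{L^{q,∞}(μ)} ≤ C ‖T‖_{B_q}` for compact `T ∈ B_q(H)`. -/
def HasSchattenWeakType (μ : Measure Ω) (φ : (H →L[ℂ] H) → Ω → ℝ) (q C : ℝ) : Prop :=
  ∀ T : H →L[ℂ] H, IsCompactOperator (⇑T) → schattenNorm q T < ⊤ →
    (⨆ (s : ℝ) (_ : 0 < s), ENNReal.ofReal s * (μ {x | s < |φ T x|}) ^ (1 / q)) ≤
      ENNReal.ofReal C * schattenNorm q T

lemma HasSchattenWeakType.measure_lt_le {q C : ℝ} (hφ : HasSchattenWeakType μ φ q C)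
    (hq : 0 < q) {T : H →L[ℂ] H} (hT : IsCompactOperator T) (hTq : schattenSum q T ≠ ⊤)
    {s : ℝ} (hs : 0 < s) :
    μ {x | s < |φ T x|} ≤ ENNReal.ofReal C ^ q * ENNReal.ofReal s ^ (-q) * schattenSum q T := by
  have := measure_lt_abs_le_of_iSup_le hq (hφ T hT ((schattenNorm_lt_top_iff hq).2 hTq)) hs
  rwa [ENNReal.mul_rpow_of_nonneg _ _ hq.le, schattenNorm_rpow hq.ne', mul_right_comm] at this

lemma ofReal_half_rpow_neg {t : ℝ} (ht : 0 < t) (q : ℝ) :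
    ENNReal.ofReal (t / 2) ^ (-q) = 2 ^ q * ENNReal.ofReal t ^ (-q) := by
  rw [div_eq_mul_inv, ENNReal.ofReal_mul ht.le, ENNReal.ofReal_inv_of_pos two_pos,
    ENNReal.ofReal_ofNat, ENNReal.mul_rpow_of_ne_zero (ENNReal.ofReal_pos.2 ht).ne'
    (ENNReal.inv_ne_zero.2 ENNReal.ofNat_ne_top), ENNReal.inv_rpow, ENNReal.rpow_neg (2 : ℝ≥0∞),
    inv_inv, mul_comm]

lemma measure_lt_le_of_hasSchattenWeakType
    (hsub : ∀ T S : H →L[ℂ] H, ∀ᵐ x ∂μ, |φ (T + S) x| ≤ |φ T x| + |φ S x|)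
    {p₀ p p₁ C₀ C₁ : ℝ} (hw₀ : HasSchattenWeakType μ φ p₀ C₀)
    (hw₁ : HasSchattenWeakType μ φ p₁ C₁) (hp₀ : 0 < p₀) (hp : 0 < p) (hpp₁ : p ≤ p₁)
    {T : H →L[ℂ] H} (hT : IsCompactOperator T) (hTp : schattenSum p T ≠ ⊤) {t : ℝ} (ht : 0 < t) :
    μ {x | t < |φ T x|} ≤
      ENNReal.ofReal C₀ ^ p₀ * 2 ^ p₀ * 3 ^ p₀ * ENNReal.ofReal t ^ (-p₀) *
          rpowSumAbove (appNumber T) t p₀ +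
        ENNReal.ofReal C₁ ^ p₁ * 2 ^ p₁ * (2 * 2 ^ p₁) * ENNReal.ofReal t ^ (-p₁) *
          rpowSumMin (appNumber T) t p₁ := by
  have hp₁ : 0 < p₁ := hp.trans_le hpp₁
  obtain ⟨F, hF, hF3, hF0, N, hRlow, hRshift⟩ :=
    exists_finiteRank_split T ht (exists_le_of_tsum_rpow_ne_top hp hTp ht)
  have hFc : IsCompactOperator F := isCompactOperator_of_finiteDimensional_range hF
  have hRc : IsCompactOperator (T - F) := hT.sub hFc
  have hFsum : schattenSum p₀ F ≤ 3 ^ p₀ * rpowSumAbove (appNumber T) t p₀ := by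
    simpa only [schattenSum, ENNReal.ofReal_ofNat] using
      tsum_rpow_le_mul_rpowSumAbove zero_le_three hp₀ hF3 hF0
  have hRsum : schattenSum p₁ (T - F) ≤ 2 * 2 ^ p₁ * rpowSumMin (appNumber T) t p₁ := by
    simpa only [schattenSum, ENNReal.ofReal_ofNat] using
      tsum_rpow_le_mul_rpowSumMin zero_le_two hp₁ N hRlow hRshift
  have hFfin : schattenSum p₀ F ≠ ⊤ := schattenSum_ne_top_of_finiteDimensional_range hp₀ hF
  have hRfin : schattenSum p₁ (T - F) ≠ ⊤ := by
    refine ne_top_of_le_ne_top ?_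
      (hRsum.trans (mul_le_mul_right (rpowSumMin_le t hp.le hpp₁) _))
    have := ENNReal.rpow_ne_top_of_nonneg (sub_nonneg.2 hpp₁) (ENNReal.ofReal_ne_top (r := t))
    unfold schattenSum at hTp
    finiteness
  calc μ {x | t < |φ T x|} ≤ μ {x | t / 2 < |φ F x|} + μ {x | t / 2 < |φ (T - F) x|} := by
        simpa using measure_lt_abs_le_add_of_ae_le (hsub F (T - F)) t
    _ ≤ ENNReal.ofReal C₀ ^ p₀ * ENNReal.ofReal (t / 2) ^ (-p₀) * schattenSum p₀ F +
        ENNReal.ofReal C₁ ^ p₁ * ENNReal.ofReal (t / 2) ^ (-p₁) * schattenSum p₁ (T - F) :=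
        add_le_add (hw₀.measure_lt_le hp₀ hFc hFfin (half_pos ht))
          (hw₁.measure_lt_le hp₁ hRc hRfin (half_pos ht))
    _ ≤ ENNReal.ofReal C₀ ^ p₀ * ENNReal.ofReal (t / 2) ^ (-p₀) *
          (3 ^ p₀ * rpowSumAbove (appNumber T) t p₀) +
        ENNReal.ofReal C₁ ^ p₁ * ENNReal.ofReal (t / 2) ^ (-p₁) *
          (2 * 2 ^ p₁ * rpowSumMin (appNumber T) t p₁) := by gcongr
    _ = _ := by
        rw [ofReal_half_rpow_neg ht, ofReal_half_rpow_neg ht]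
        ring

end Interpolation

theorem schatten_marcinkiewicz_general
    {Ω : Type*} [MeasurableSpace Ω] (μ : Measure Ω)
    (p₀ p₁ : ℝ) (hp₀ : 0 < p₀)
    (φ : (H →L[ℂ] H) → Ω → ℝ)
    (hsub : ∀ T S : H →L[ℂ] H,
      ∀ᵐ x ∂μ, |φ (T + S) x| ≤ |φ T x| + |φ S x|)
    (C₀ C₁ : ℝ)
    (hw₀ : ∀ T : H →L[ℂ] H, IsCompactOperator (⇑T) → schattenNorm p₀ T < ⊤ →
      (⨆ (s : ℝ) (_ : 0 < s), ENNReal.ofReal s * (μ {x | s < |φ T x|}) ^ (1 / p₀))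
        ≤ ENNReal.ofReal C₀ * schattenNorm p₀ T)
    (hw₁ : ∀ T : H →L[ℂ] H, IsCompactOperator (⇑T) → schattenNorm p₁ T < ⊤ →
      (⨆ (s : ℝ) (_ : 0 < s), ENNReal.ofReal s * (μ {x | s < |φ T x|}) ^ (1 / p₁))
        ≤ ENNReal.ofReal C₁ * schattenNorm p₁ T) :
    ∀ p : ℝ, p₀ < p → p < p₁ →
      ∃ C : ℝ, 0 < C ∧ ∀ T : H →L[ℂ] H, IsCompactOperator (⇑T) →
        schattenNorm p T < ⊤ →
          (∫⁻ x, ENNReal.ofReal (|φ T x|) ^ p ∂μ) ^ (1 / p)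
            ≤ ENNReal.ofReal C * schattenNorm p T := by
  intro p hp₀p hpp₁
  have hp : 0 < p := hp₀.trans hp₀p
  set D : ℝ≥0∞ := 2 ^ p * (ENNReal.ofReal C₀ ^ p₀ * 2 ^ p₀ * 3 ^ p₀ * dyadicSumConst (p - p₀) +
    ENNReal.ofReal C₁ ^ p₁ * 2 ^ p₁ * (2 * 2 ^ p₁) *
      (dyadicSumConst p + dyadicSumConst (p₁ - p)))
  have hD : D ^ (1 / p) ≠ ⊤ := by
    have := hp₀.le
    have := hp.le
    have := (hp.trans hpp₁).le
    have := dyadicSumConst_ne_top (sub_pos.2 hp₀p)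
    have := dyadicSumConst_ne_top hp
    have := dyadicSumConst_ne_top (sub_pos.2 hpp₁)
    simp only [D]
    finiteness
  refine ⟨(D ^ (1 / p)).toReal + 1, by positivity, fun T hT hTp => ?_⟩
  have hint : ∫⁻ x, ENNReal.ofReal |φ T x| ^ p ∂μ ≤ D * schattenSum p T :=
    lintegral_rpow_le_of_measure_lt_le hp hp₀p hpp₁ fun j =>
      measure_lt_le_of_hasSchattenWeakType hsub hw₀ hw₁ hp₀ hp hpp₁.le hT
        ((schattenNorm_lt_top_iff hp).1 hTp) (zpow_pos two_pos j)
  calc (∫⁻ x, ENNReal.ofReal |φ T x| ^ p ∂μ) ^ (1 / p) ≤ (D * schattenSum p T) ^ (1 / p) := by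
        gcongr
    _ = D ^ (1 / p) * schattenNorm p T := ENNReal.mul_rpow_of_nonneg _ _ (by positivity)
    _ ≤ ENNReal.ofReal ((D ^ (1 / p)).toReal + 1) * schattenNorm p T := by
        gcongr
        rw [← ENNReal.ofReal_toReal hD]
        exact ENNReal.ofReal_le_ofReal (by simp)

/-- Marcinkiewicz interpolation for sublinear operators on
Schatten classes: if `φ` is sublinear and satisfies weak-type bounds
`‖φ(T)‖_{L^{pᵢ,∞}} ≤ Cᵢ ‖T‖_{B_{pᵢ}}` for `i = 0,1`, then for every
`p₀ < p < p₁` there is `C > 0` with `‖φ(T)‖_{L^p} ≤ C ‖T‖_{B_p}`. -/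
theorem schatten_marcinkiewicz [TopologicalSpace.SeparableSpace H]
    {Ω : Type*} [MeasurableSpace Ω] (μ : Measure Ω)
    (p₀ p₁ : ℝ) (hp₀ : 0 < p₀) (hp₀₁ : p₀ < p₁)
    (φ : (H →L[ℂ] H) → Ω → ℝ)
    (hsub : ∀ T S : H →L[ℂ] H,
      ∀ᵐ x ∂μ, |φ (T + S) x| ≤ |φ T x| + |φ S x|)
    (hhom : ∀ (c : ℂ) (T : H →L[ℂ] H), ∀ᵐ x ∂μ, |φ (c • T) x| = ‖c‖ * |φ T x|)
    (C₀ C₁ : ℝ)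
    (hw₀ : ∀ T : H →L[ℂ] H, IsCompactOperator (⇑T) → schattenNorm p₀ T < ⊤ →
      (⨆ (s : ℝ) (_ : 0 < s), ENNReal.ofReal s * (μ {x | s < |φ T x|}) ^ (1 / p₀))
        ≤ ENNReal.ofReal C₀ * schattenNorm p₀ T)
    (hw₁ : ∀ T : H →L[ℂ] H, IsCompactOperator (⇑T) → schattenNorm p₁ T < ⊤ →
      (⨆ (s : ℝ) (_ : 0 < s), ENNReal.ofReal s * (μ {x | s < |φ T x|}) ^ (1 / p₁))
        ≤ ENNReal.ofReal C₁ * schattenNorm p₁ T) :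
    ∀ p : ℝ, p₀ < p → p < p₁ →
      ∃ C : ℝ, 0 < C ∧ ∀ T : H →L[ℂ] H, IsCompactOperator (⇑T) →
        schattenNorm p T < ⊤ →
          (∫⁻ x, ENNReal.ofReal (|φ T x|) ^ p ∂μ) ^ (1 / p)
            ≤ ENNReal.ofReal C * schattenNorm p T :=
  schatten_marcinkiewicz_general μ p₀ p₁ hp₀ φ hsub C₀ C₁ hw₀ hw₁
end

section
/- Let φ : ℕ → (0,∞) be in weak-ℓ¹ with norm M, let 1 < p ≤ b ≤ p' < ∞, and suppose a : ℕ → [0,∞) is a sequence satisfying both (∑_n a(n)^p φ(n)^{2−p})^{1/p} ≤ C₁ M^{(2−p)/p} A (Paley bound) and (∑_n a(n)^{p'})^{1/p'} ≤ C₂ A (Hausdorff–Young bound) for some A > 0. Then there exists C > 0, depending only on p, b, C₁, C₂, such that (∑_n (a(n) φ(n)^{1/b − 1/p'})^b)^{1/b} ≤ C M^{1/b − 1/p'} A. -/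
/-!
Write `1 / b = t / p + (1 - t) / p'` with `t ∈ [0, 1]`. Since `(2 - p) / p = 1 / p - 1 / p'`, the
weight exponent `1 / b - 1 / p'` equals `t (2 - p) / p`, so
`a φ ^ (1 / b - 1 / p') = (a φ ^ ((2 - p) / p)) ^ t * a ^ (1 - t)`. Hölder's inequality with the
conjugate exponents `p / (t b)` and `p' / ((1 - t) b)` bounds the `ℓ^b` norm of this product by
the `t`-th power of the weighted `ℓ^p` norm times the `(1 - t)`-th power of the `ℓ^{p'}` norm,
which gives the claim with `C = C₁ ^ t C₂ ^ (1 - t)` (after replacing `Cᵢ` by `max Cᵢ 1`).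
-/

open scoped ENNReal
open MeasureTheory

theorem div_add_one_sub_div_pos {p q t : ℝ} (hp : 0 < p) (hq : 0 < q) (ht₀ : 0 ≤ t)
    (ht₁ : t ≤ 1) : 0 < t / p + (1 - t) / q := by
  rcases ht₀.eq_or_lt with rfl | ht₀
  · simpa using hq
  · have := sub_nonneg.2 ht₁
    positivity

theorem exists_one_div_eq_div_add_one_sub_div {p q b : ℝ} (hp : 0 < p) (hpb : p ≤ b)
    (hbq : b ≤ q) :
    ∃ t, 0 ≤ t ∧ t ≤ 1 ∧ 1 / b = t / p + (1 - t) / q := by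
  have hqb : 1 / q ≤ 1 / b := one_div_le_one_div_of_le (hp.trans_le hpb) hbq
  have hbp : 1 / b ≤ 1 / p := one_div_le_one_div_of_le hp hpb
  rcases (hqb.trans hbp).eq_or_lt with hpq | hpq
  · exact ⟨1, zero_le_one, le_rfl, by linarith [show (1 - 1 : ℝ) / q = 0 by simp]⟩
  have hd : 1 / p - 1 / q ≠ 0 := by linarith
  refine ⟨(1 / b - 1 / q) / (1 / p - 1 / q), by bound, ?_, ?_⟩
  · exact div_le_one_of_le₀ (by linarith) (by linarith)
  · linear_combination (-1 : ℝ) * div_mul_cancel₀ (1 / b - 1 / q) hd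

theorem Real.rpow_mul_rpow_one_sub {x : ℝ} (hx : 0 ≤ x) (t : ℝ) : x ^ t * x ^ (1 - t) = x := by
  rw [← Real.rpow_add' hx (by norm_num), add_sub_cancel, Real.rpow_one]

namespace ENNReal

variable {ι : Type*}

theorem tsum_rpow_mul_rpow_le (f g : ι → ℝ≥0∞) {θ : ℝ} (hθ₀ : 0 ≤ θ) (hθ₁ : θ ≤ 1) :
    ∑' i, f i ^ θ * g i ^ (1 - θ) ≤ (∑' i, f i) ^ θ * (∑' i, g i) ^ (1 - θ) := by
  let _ : MeasurableSpace ι := ⊤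
  rcases hθ₀.eq_or_lt with rfl | hθ₀
  · simp
  rcases hθ₁.eq_or_lt with rfl | hθ₁
  · simp
  have hθ : θ ≠ 0 := hθ₀.ne'
  have hθ' : 1 - θ ≠ 0 := by linarith
  have := lintegral_mul_le_Lp_mul_Lq Measure.count
    (Real.holderConjugate_one_div hθ₀ (sub_pos.2 hθ₁) (add_sub_cancel θ 1))
    (f := fun i => f i ^ θ) (g := fun i => g i ^ (1 - θ))
    Measurable.of_discrete.aemeasurable Measurable.of_discrete.aemeasurable
  simpa [lintegral_count, ← rpow_mul, hθ, hθ'] using this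

theorem tsum_rpow_interpolate_le (x y : ι → ℝ≥0∞) {p q b t : ℝ} (hp : 0 < p) (hq : 0 < q)
    (ht₀ : 0 ≤ t) (ht₁ : t ≤ 1) (hb : 1 / b = t / p + (1 - t) / q) :
    (∑' i, (x i ^ t * y i ^ (1 - t)) ^ b) ^ (1 / b) ≤
      ((∑' i, x i ^ p) ^ (1 / p)) ^ t * ((∑' i, y i ^ q) ^ (1 / q)) ^ (1 - t) := by
  have hb₀ : 0 < b := one_div_pos.1 (hb ▸ div_add_one_sub_div_pos hp hq ht₀ ht₁)
  have hpθ : p * (t * b / p) = t * b := by field_simp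
  have hqθ : q * (1 - t * b / p) = (1 - t) * b := by
    field_simp at hb ⊢
    linear_combination hb
  generalize t * b / p = θ at hpθ hqθ
  have hθ₀ : 0 ≤ θ := by nlinarith
  have hθ₁ : θ ≤ 1 := by nlinarith
  have hterm (i : ι) : (x i ^ t * y i ^ (1 - t)) ^ b = (x i ^ p) ^ θ * (y i ^ q) ^ (1 - θ) := by
    rw [mul_rpow_of_nonneg _ _ hb₀.le, ← rpow_mul, ← rpow_mul, ← rpow_mul, ← rpow_mul, hpθ, hqθ]
  calc (∑' i, (x i ^ t * y i ^ (1 - t)) ^ b) ^ (1 / b)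
      ≤ ((∑' i, x i ^ p) ^ θ * (∑' i, y i ^ q) ^ (1 - θ)) ^ (1 / b) := by
        simp only [hterm]
        gcongr
        exact tsum_rpow_mul_rpow_le _ _ hθ₀ hθ₁
    _ = ((∑' i, x i ^ p) ^ (1 / p)) ^ t * ((∑' i, y i ^ q) ^ (1 / q)) ^ (1 - t) := by
        rw [mul_rpow_of_nonneg _ _ (by positivity), ← rpow_mul, ← rpow_mul, ← rpow_mul,
          ← rpow_mul]
        congr 2
        · field_simp; linear_combination hpθ
        · field_simp; linear_combination hqθ

theorem tsum_ofReal_rpow_interpolate_le {a v : ι → ℝ} (ha : ∀ i, 0 ≤ a i) (hv : ∀ i, 0 ≤ v i)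
    {p q b t K₀ K₁ : ℝ} (hp : 0 < p) (hq : 0 < q) (ht₀ : 0 ≤ t) (ht₁ : t ≤ 1)
    (hb : 1 / b = t / p + (1 - t) / q) (hK₀ : 0 ≤ K₀) (hK₁ : 0 ≤ K₁)
    (h₀ : (∑' i, ENNReal.ofReal ((a i * v i) ^ p)) ^ (1 / p) ≤ ENNReal.ofReal K₀)
    (h₁ : (∑' i, ENNReal.ofReal (a i ^ q)) ^ (1 / q) ≤ ENNReal.ofReal K₁) :
    (∑' i, ENNReal.ofReal ((a i * v i ^ t) ^ b)) ^ (1 / b) ≤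
      ENNReal.ofReal (K₀ ^ t * K₁ ^ (1 - t)) := by
  have hb₀ : 0 < b := one_div_pos.1 (hb ▸ div_add_one_sub_div_pos hp hq ht₀ ht₁)
  have hterm (i : ι) : ENNReal.ofReal ((a i * v i ^ t) ^ b) =
      (ENNReal.ofReal (a i * v i) ^ t * ENNReal.ofReal (a i) ^ (1 - t)) ^ b := by
    have hai := ha i
    have hvi := hv i
    rw [ofReal_rpow_of_nonneg (by positivity) ht₀, ofReal_rpow_of_nonneg hai (by linarith),
      ← ofReal_mul (by positivity), ofReal_rpow_of_nonneg (by positivity) hb₀.le,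
      Real.mul_rpow hai hvi, mul_right_comm, Real.rpow_mul_rpow_one_sub hai]
  rw [tsum_congr fun i => (ofReal_rpow_of_nonneg (mul_nonneg (ha i) (hv i)) hp.le).symm] at h₀
  rw [tsum_congr fun i => (ofReal_rpow_of_nonneg (ha i) hq.le).symm] at h₁
  calc (∑' i, ENNReal.ofReal ((a i * v i ^ t) ^ b)) ^ (1 / b)
      = (∑' i, (ENNReal.ofReal (a i * v i) ^ t * ENNReal.ofReal (a i) ^ (1 - t)) ^ b) ^ (1 / b) :=
        by simp only [hterm]
    _ ≤ ENNReal.ofReal K₀ ^ t * ENNReal.ofReal K₁ ^ (1 - t) := by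
        grw [tsum_rpow_interpolate_le _ _ hp hq ht₀ ht₁ hb, h₀, h₁]
        · linarith
    _ = ENNReal.ofReal (K₀ ^ t * K₁ ^ (1 - t)) := by
        rw [ofReal_rpow_of_nonneg hK₀ ht₀, ofReal_rpow_of_nonneg hK₁ (by linarith),
          ← ofReal_mul (by positivity)]

end ENNReal

/-- Hausdorff–Young–Paley interpolation for sequences: there is a
constant `C > 0` depending only on `p, b, C₁, C₂` such that whenever a nonnegative
sequence `a` satisfies both the Paley bound
`(∑ a(n)^p φ(n)^{2-p})^{1/p} ≤ C₁ M^{(2-p)/p} A` and the Hausdorff–Young bound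
`(∑ a(n)^{p'})^{1/p'} ≤ C₂ A` for a positive weak-`ℓ¹` weight `φ` with norm `M`,
one has `(∑ (a(n) φ(n)^{1/b - 1/p'})^b)^{1/b} ≤ C M^{1/b - 1/p'} A`. -/
theorem hausdorff_young_paley_sequences
    (p p' b : ℝ) (hp1 : 1 < p) (hpb : p ≤ b) (hbp' : b ≤ p')
    (hp' : p' = p / (p - 1)) (C₁ C₂ : ℝ) :
    ∃ C : ℝ, 0 < C ∧
      ∀ (φ : ℕ → ℝ), (∀ n, 0 < φ n) →
      ∀ M : ℝ, 0 < M →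
      (∀ s : ℝ, 0 < s → {n : ℕ | s < φ n}.Finite) →
      (∀ s : ℝ, 0 < s → s * ({n : ℕ | s < φ n}.ncard : ℝ) ≤ M) →
      ∀ (a : ℕ → ℝ), (∀ n, 0 ≤ a n) →
      ∀ A : ℝ, 0 < A →
      ((∑' n : ℕ, ENNReal.ofReal (a n ^ p * φ n ^ (2 - p))) ^ (1 / p)
        ≤ ENNReal.ofReal (C₁ * M ^ ((2 - p) / p) * A)) →
      ((∑' n : ℕ, ENNReal.ofReal (a n ^ p')) ^ (1 / p')
        ≤ ENNReal.ofReal (C₂ * A)) →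
      (∑' n : ℕ, ENNReal.ofReal ((a n * φ n ^ (1 / b - 1 / p')) ^ b)) ^ (1 / b)
        ≤ ENNReal.ofReal (C * M ^ (1 / b - 1 / p') * A) := by
  have hp₀ : 0 < p := by linarith
  obtain ⟨t, ht₀, ht₁, hb⟩ := exists_one_div_eq_div_add_one_sub_div hp₀ hpb hbp'
  have hα : (2 - p) / p = 1 / p - 1 / p' := by
    rw [hp']
    field_simp [(by linarith : p - 1 ≠ 0)]
    ring
  have hβ : (2 - p) / p * t = 1 / b - 1 / p' := by
    rw [hα]
    linear_combination -hb
  have hc₁ : 0 < max C₁ 1 := lt_max_of_lt_right one_pos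
  have hc₂ : 0 < max C₂ 1 := lt_max_of_lt_right one_pos
  refine ⟨max C₁ 1 ^ t * max C₂ 1 ^ (1 - t), by positivity, ?_⟩
  intro φ hφ M hM _ _ a ha A hA hPaley hHY
  have hweight (n : ℕ) : (a n * φ n ^ ((2 - p) / p)) ^ p = a n ^ p * φ n ^ (2 - p) := by
    rw [Real.mul_rpow (ha n) (Real.rpow_nonneg (hφ n).le _), ← Real.rpow_mul (hφ n).le,
      div_mul_cancel₀ _ hp₀.ne']
  have hPaley' : (∑' n, ENNReal.ofReal ((a n * φ n ^ ((2 - p) / p)) ^ p)) ^ (1 / p) ≤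
      ENNReal.ofReal (max C₁ 1 * M ^ ((2 - p) / p) * A) := by
    simp only [hweight]
    exact hPaley.trans (ENNReal.ofReal_le_ofReal (by gcongr; exact le_max_left _ _))
  have hHY' : (∑' n, ENNReal.ofReal (a n ^ p')) ^ (1 / p') ≤ ENNReal.ofReal (max C₂ 1 * A) :=
    hHY.trans (ENNReal.ofReal_le_ofReal (by gcongr; exact le_max_left _ _))
  have key := ENNReal.tsum_ofReal_rpow_interpolate_le ha
    (fun n => Real.rpow_nonneg (hφ n).le ((2 - p) / p)) hp₀ (by linarith) ht₀ ht₁ hb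
    (by positivity) (by positivity) hPaley' hHY'
  simp only [← Real.rpow_mul (hφ _).le, hβ] at key
  refine key.trans_eq (congrArg ENNReal.ofReal ?_)
  rw [Real.mul_rpow (by positivity) hA.le, Real.mul_rpow hc₁.le (by positivity),
    Real.mul_rpow hc₂.le hA.le, ← Real.rpow_mul hM.le, hβ]
  linear_combination (max C₁ 1 ^ t * max C₂ 1 ^ (1 - t) * M ^ (1 / b - 1 / p')) *
    Real.rpow_mul_rpow_one_sub hA.le t
end

section
/- Let (Ω, μ) be a σ-finite measure space, w : Ω → (0,∞) measurable, and f : Ω → [0,∞] measurable. Then ∫₀^∞ f*(t) / (1/w)*(t) dt ≤ ∫_Ω f(x) w(x) dμ(x), where g* denotes the decreasing rearrangement of a nonnegative measurable function g. -/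
/-!
Write `W_*(t) = 1 / (1/W)*(t)` for the increasing rearrangement of `W = ofReal ∘ w`, so
the integrand is `f*(t) W_*(t)`. Expanding `f*(t)` by the layer-cake formula and using that
`s < f*(t)` forces `t < μ{f > s}`, it suffices to prove `∫₀^{μ A} W_* ≤ ∫_A W` for every
set `A` and then to integrate over the level sets `A = {f > s}`. For that, expand `W_*` by
the layer-cake formula once more: `r < W_*(t)` forces `μ{W ≤ r} ≤ t`, so the `t < μ A` with
`r < W_*(t)` form a set of length at most `μ A - μ{W ≤ r} ≤ μ(A ∩ {W > r})`, whose integral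
over `r` is `∫_A W`.
-/

open MeasureTheory
open scoped ENNReal

/-- Decreasing rearrangement of a nonnegative (extended-real valued) measurable
function: `g*(t) = inf {s | μ({x | g x > s}) ≤ t}`. -/
noncomputable def rearrangement {Ω : Type*} [MeasurableSpace Ω]
    (μ : Measure Ω) (g : Ω → ℝ≥0∞) (t : ℝ≥0∞) : ℝ≥0∞ :=
  sInf {s : ℝ≥0∞ | μ {x | s < g x} ≤ t}

open Set
open ENNReal (ofReal)

theorem volume_restrict_Ioi_setOf_ofReal_lt (a : ℝ≥0∞) :
    volume.restrict (Ioi (0 : ℝ)) {s | ofReal s < a} = a := by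
  rw [Measure.restrict_apply (measurableSet_lt ENNReal.measurable_ofReal measurable_const)]
  rcases eq_or_ne a ∞ with rfl | ha
  · simp
  · have : {s : ℝ | ofReal s < a} ∩ Ioi 0 = Ioo 0 a.toReal := by
      ext s
      simp only [mem_inter_iff, mem_ofPred_eq, mem_Ioi, mem_Ioo]
      exact ⟨fun h => ⟨h.2, (ENNReal.ofReal_lt_iff_lt_toReal h.2.le ha).1 h.1⟩,
        fun h => ⟨(ENNReal.ofReal_lt_iff_lt_toReal h.1.le ha).2 h.2, h.1⟩⟩
    rw [this, Real.volume_Ioo, sub_zero, ENNReal.ofReal_toReal ha]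

theorem volume_restrict_Ioi_setOf_ofReal_mem_Ico_add_le (c d : ℝ≥0∞) :
    volume.restrict (Ioi (0 : ℝ)) {t | c ≤ ofReal t ∧ ofReal t < c + d} ≤ d := by
  rcases eq_or_ne d ∞ with rfl | hd
  · exact le_top
  rcases eq_or_ne c ∞ with rfl | hc
  · simp
  calc volume.restrict (Ioi (0 : ℝ)) {t | c ≤ ofReal t ∧ ofReal t < c + d}
      ≤ volume (Ico c.toReal (c.toReal + d.toReal)) := by
        rw [Measure.restrict_apply' measurableSet_Ioi]
        refine measure_mono ?_
        rintro t ⟨⟨hct, htd⟩, ht : 0 < t⟩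
        rw [ENNReal.le_ofReal_iff_toReal_le hc ht.le] at hct
        rw [ENNReal.ofReal_lt_iff_lt_toReal ht.le (ENNReal.add_ne_top.2 ⟨hc, hd⟩),
          ENNReal.toReal_add hc hd] at htd
        exact ⟨hct, htd⟩
    _ = d := by simp [ENNReal.ofReal_toReal hd]

section LayerCake

variable {α : Type*} [MeasurableSpace α]

theorem lintegral_eq_lintegral_meas_ofReal_lt (μ : Measure α) [SFinite μ] {g : α → ℝ≥0∞}
    (hg : Measurable g) :
    ∫⁻ x, g x ∂μ = ∫⁻ s in Ioi 0, μ {x | ofReal s < g x} := by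
  have hS : MeasurableSet {p : ℝ × α | ofReal p.1 < g p.2} :=
    measurableSet_lt (ENNReal.measurable_ofReal.comp measurable_fst) (hg.comp measurable_snd)
  calc ∫⁻ x, g x ∂μ = ∫⁻ x, volume.restrict (Ioi 0) {s | ofReal s < g x} ∂μ := by
        simp_rw [volume_restrict_Ioi_setOf_ofReal_lt]
    _ = (volume.restrict (Ioi 0)).prod μ {p : ℝ × α | ofReal p.1 < g p.2} :=
        (Measure.prod_apply_symm hS).symm
    _ = _ := Measure.prod_apply hS

theorem lintegral_mul_eq_lintegral_setLIntegral_ofReal_lt (μ : Measure α) [SFinite μ]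
    {g W : α → ℝ≥0∞} (hg : Measurable g) (hW : Measurable W) :
    ∫⁻ x, g x * W x ∂μ = ∫⁻ s in Ioi 0, ∫⁻ x in {x | ofReal s < g x}, W x ∂μ := by
  simp_rw [mul_comm (g _), ← Pi.mul_apply W g,
    ← lintegral_withDensity_eq_lintegral_mul μ hW hg, lintegral_eq_lintegral_meas_ofReal_lt _ hg]
  exact lintegral_congr fun s => withDensity_apply _ (measurableSet_lt measurable_const hg)

end LayerCake

section Rearrangement

variable {Ω : Type*} [MeasurableSpace Ω]

noncomputable def increasingRearrangement (μ : Measure Ω) (W : Ω → ℝ≥0∞) (t : ℝ≥0∞) :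
    ℝ≥0∞ :=
  (rearrangement μ (fun x => (W x)⁻¹) t)⁻¹

theorem rearrangement_antitone (μ : Measure Ω) (g : Ω → ℝ≥0∞) :
    Antitone (rearrangement μ g) := fun _ _ hτ =>
  sInf_le_sInf fun _ hs => hs.trans hτ

theorem increasingRearrangement_monotone (μ : Measure Ω) (W : Ω → ℝ≥0∞) :
    Monotone (increasingRearrangement μ W) := fun _ _ hτ =>
  ENNReal.inv_le_inv.2 (rearrangement_antitone μ _ hτ)

theorem lt_measure_of_lt_rearrangement {μ : Measure Ω} {g : Ω → ℝ≥0∞} {τ σ : ℝ≥0∞}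
    (h : σ < rearrangement μ g τ) : τ < μ {x | σ < g x} :=
  not_le.1 fun hσ => (sInf_le (s := {s | μ {x | s < g x} ≤ τ}) hσ).not_gt h

theorem measure_ge_le_of_rearrangement_lt {μ : Measure Ω} {g : Ω → ℝ≥0∞} {τ σ : ℝ≥0∞}
    (h : rearrangement μ g τ < σ) : μ {x | σ ≤ g x} ≤ τ := by
  obtain ⟨s, hs, hsσ⟩ := sInf_lt_iff.1 h
  exact (measure_mono fun x hx => hsσ.trans_le hx).trans hs

theorem measure_le_le_of_lt_increasingRearrangement {μ : Measure Ω} {W : Ω → ℝ≥0∞}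
    {τ ρ : ℝ≥0∞} (h : ρ < increasingRearrangement μ W τ) : μ {x | W x ≤ ρ} ≤ τ := by
  have := measure_ge_le_of_rearrangement_lt (ENNReal.lt_inv_iff_lt_inv.1 h)
  simpa only [ENNReal.inv_le_inv] using this

theorem setLIntegral_increasingRearrangement_le (μ : Measure Ω) [SFinite μ]
    {W : Ω → ℝ≥0∞} (hW : Measurable W) (A : Set Ω) :
    ∫⁻ t in {t : ℝ | ofReal t < μ A}, increasingRearrangement μ W (ofReal t)
        ∂volume.restrict (Ioi 0)
      ≤ ∫⁻ x in A, W x ∂μ := by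
  have hH : Measurable fun t : ℝ => increasingRearrangement μ W (ofReal t) :=
    ((increasingRearrangement_monotone μ W).comp ENNReal.ofReal_mono).measurable
  rw [lintegral_eq_lintegral_meas_ofReal_lt _ hH, lintegral_eq_lintegral_meas_ofReal_lt _ hW]
  refine lintegral_mono fun r => ?_
  rw [Measure.restrict_apply (measurableSet_lt measurable_const hH),
    Measure.restrict_apply (measurableSet_lt measurable_const hW)]
  have hA_le : μ A ≤ μ {x | W x ≤ ofReal r} + μ ({x | ofReal r < W x} ∩ A) := by
    calc μ A ≤ μ (A ∩ {x | ofReal r < W x}) + μ (A \ {x | ofReal r < W x}) :=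
          measure_le_inter_add_sdiff _ _ _
      _ ≤ _ := by
          rw [add_comm, inter_comm]
          gcongr
          exact fun x hx => (not_lt.1 hx.2 : W x ≤ _)
  refine (measure_mono ?_).trans
    (volume_restrict_Ioi_setOf_ofReal_mem_Ico_add_le (μ {x | W x ≤ ofReal r}) _)
  rintro t ⟨hrt, htA⟩
  exact ⟨measure_le_le_of_lt_increasingRearrangement hrt, htA.trans_le hA_le⟩

end Rearrangement

theorem rearrangement_pairing_le_general {Ω : Type*} [MeasurableSpace Ω]
    (μ : Measure Ω) [SigmaFinite μ]
    (w : Ω → ℝ) (hwmeas : Measurable w)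
    (f : Ω → ℝ≥0∞) (hf : Measurable f) :
    (∫⁻ t in Set.Ioi (0 : ℝ),
        rearrangement μ f (ENNReal.ofReal t)
          / rearrangement μ (fun x => (ENNReal.ofReal (w x))⁻¹) (ENNReal.ofReal t))
      ≤ ∫⁻ x, f x * ENNReal.ofReal (w x) ∂μ := by
  set W : Ω → ℝ≥0∞ := fun x => ofReal (w x)
  have hW : Measurable W := ENNReal.measurable_ofReal.comp hwmeas
  have hG : Measurable fun t : ℝ => rearrangement μ f (ofReal t) :=
    ((rearrangement_antitone μ f).comp_monotone ENNReal.ofReal_mono).measurable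
  have hH : Measurable fun t : ℝ => increasingRearrangement μ W (ofReal t) :=
    ((increasingRearrangement_monotone μ W).comp ENNReal.ofReal_mono).measurable
  calc _ = ∫⁻ t in Ioi 0,
          rearrangement μ f (ofReal t) * increasingRearrangement μ W (ofReal t) := by
        simp_rw [div_eq_mul_inv]; rfl
    _ = ∫⁻ s in Ioi 0, ∫⁻ t in {t | ofReal s < rearrangement μ f (ofReal t)},
          increasingRearrangement μ W (ofReal t) ∂volume.restrict (Ioi 0) :=
        lintegral_mul_eq_lintegral_setLIntegral_ofReal_lt _ hG hH
    _ ≤ ∫⁻ s in Ioi 0, ∫⁻ t in {t : ℝ | ofReal t < μ {x | ofReal s < f x}},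
          increasingRearrangement μ W (ofReal t) ∂volume.restrict (Ioi 0) :=
        lintegral_mono fun _ => lintegral_mono_set fun _ => lt_measure_of_lt_rearrangement
    _ ≤ ∫⁻ s in Ioi 0, ∫⁻ x in {x | ofReal s < f x}, W x ∂μ :=
        lintegral_mono fun _ => setLIntegral_increasingRearrangement_le μ hW _
    _ = ∫⁻ x, f x * W x ∂μ := (lintegral_mul_eq_lintegral_setLIntegral_ofReal_lt μ hf hW).symm

/-- Hardy–Littlewood-type rearrangement inequality:
`∫₀^∞ f*(t) / (1/w)*(t) dt ≤ ∫_Ω f(x) w(x) dμ(x)`. -/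
theorem rearrangement_pairing_le {Ω : Type*} [MeasurableSpace Ω]
    (μ : Measure Ω) [SigmaFinite μ]
    (w : Ω → ℝ) (hwmeas : Measurable w) (hwpos : ∀ x, 0 < w x)
    (f : Ω → ℝ≥0∞) (hf : Measurable f) :
    (∫⁻ t in Set.Ioi (0 : ℝ),
        rearrangement μ f (ENNReal.ofReal t)
          / rearrangement μ (fun x => (ENNReal.ofReal (w x))⁻¹) (ENNReal.ofReal t))
      ≤ ∫⁻ x, f x * ENNReal.ofReal (w x) ∂μ :=
  rearrangement_pairing_le_general μ w hwmeas f hf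
end
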